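/- arXiv:0811.3245 — 12 statements merged into one kernel-verified Lean document; each statement's English description precedes it below -/
import Mathlib

section
/- In an agreeable linear society, there is a platform approved by at least half of the voters. Precisely: let X be a closed subset of ℝ, let V be a finite set of voters with |V| ≥ 3, and for each v ∈ V let A_v = X ∩ I_v with I_v empty or a closed bounded interval. If among every three voters some two have approval sets with a common point, then there exists a point p ∈ X such that the number of voters v with p ∈ A_v is at least |V|/2. -/
/-- Helly-type lemma: a finite family of pairwise intersecting sets of the form
`X ∩ Icc a b` with `X` closed has a common point in `X`. -/
lemma helly_aux {ι : Type*} (X : Set ℝ) (hX : IsClosed X) (A : ι → Set ℝ)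
    (S : Finset ι) (hS : S.Nonempty)
    (hA : ∀ v ∈ S, ∃ a b : ℝ, a ≤ b ∧ A v = X ∩ Set.Icc a b)
    (hpair : ∀ v ∈ S, ∀ w ∈ S, (A v ∩ A w).Nonempty) :
    ∃ p ∈ X, ∀ v ∈ S, p ∈ A v := by
  have hbd : ∀ v ∈ S, BddBelow (A v) := by
    intro v hv
    obtain ⟨a, b, hab, hEq⟩ := hA v hv
    exact ⟨a, fun x hx => by rw [hEq] at hx; exact hx.2.1⟩
  have hmem : ∀ v ∈ S, sInf (A v) ∈ A v := by
    intro v hv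
    obtain ⟨a, b, hab, hEq⟩ := hA v hv
    have hne : (A v).Nonempty := (hpair v hv v hv).mono Set.inter_subset_left
    have hcl : IsClosed (A v) := by rw [hEq]; exact hX.inter isClosed_Icc
    exact hcl.csInf_mem hne (hbd v hv)
  obtain ⟨v0, hv0, hmax⟩ := S.exists_max_image (fun v => sInf (A v)) hS
  have hpX : sInf (A v0) ∈ X := by
    obtain ⟨a, b, hab, hEq⟩ := hA v0 hv0
    have h := hmem v0 hv0
    rw [hEq] at h ⊢; exact h.1
  refine ⟨sInf (A v0), hpX, fun v hv => ?_⟩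
  obtain ⟨a, b, hab, hEq⟩ := hA v hv
  obtain ⟨x, hx1, hx2⟩ := hpair v0 hv0 v hv
  have h1 : sInf (A v) ≤ sInf (A v0) := hmax v hv
  have h2 : sInf (A v0) ≤ x := csInf_le (hbd v0 hv0) hx1
  have ha : a ≤ sInf (A v) := by
    have h := hmem v hv; rw [hEq] at h ⊢; exact h.2.1
  have hb : x ≤ b := by rw [hEq] at hx2; exact hx2.2.2
  rw [hEq]
  exact ⟨hpX, le_trans ha h1, le_trans h2 hb⟩

/-- **Agreeable Linear Society Theorem (majority version).**
In a linear society with at least 3 voters in which among every three voters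
some two have intersecting approval sets, there is a platform approved by at
least half of the voters. -/
theorem agreeable_linear_society
    {ι : Type*} (X : Set ℝ) (hX : IsClosed X)
    (V : Finset ι) (hV : 3 ≤ V.card)
    (A : ι → Set ℝ)
    (hA : ∀ v ∈ V, A v = ∅ ∨ ∃ a b : ℝ, a ≤ b ∧ A v = X ∩ Set.Icc a b)
    (hagree : ∀ u ∈ V, ∀ v ∈ V, ∀ w ∈ V, u ≠ v → u ≠ w → v ≠ w →
      (A u ∩ A v).Nonempty ∨ (A u ∩ A w).Nonempty ∨ (A v ∩ A w).Nonempty) :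
    ∃ p ∈ X, V.card ≤ 2 * {v ∈ (V : Set ι) | p ∈ A v}.ncard := by
  classical
  -- counting helper: a clique of size ≥ |V|/2 with a common point gives the claim
  have count : ∀ (S : Finset ι), S ⊆ V → V.card ≤ 2 * S.card →
      (∃ p ∈ X, ∀ v ∈ S, p ∈ A v) →
      ∃ p ∈ X, V.card ≤ 2 * {v ∈ (V : Set ι) | p ∈ A v}.ncard := by
    rintro S hSV hScard ⟨p, hpX, hp⟩
    refine ⟨p, hpX, le_trans hScard ?_⟩
    have h1 : (S : Set ι) ⊆ {v ∈ (V : Set ι) | p ∈ A v} :=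
      fun v hv => ⟨hSV hv, hp v hv⟩
    have h2 : {v ∈ (V : Set ι) | p ∈ A v}.Finite :=
      V.finite_toSet.subset (fun v hv => hv.1)
    have h3 := Set.ncard_le_ncard h1 h2
    rw [Set.ncard_coe_finset] at h3
    omega
  by_cases hall : ∀ v ∈ V, (A v).Nonempty
  · -- all approval sets nonempty
    have hIcc : ∀ v ∈ V, ∃ a b : ℝ, a ≤ b ∧ A v = X ∩ Set.Icc a b := by
      intro v hv
      rcases hA v hv with h | h
      · exact absurd (hall v hv) (by rw [h]; simp)
      · exact h
    have hsubX : ∀ v ∈ V, A v ⊆ X := by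
      intro v hv
      obtain ⟨a, b, _, hEq⟩ := hIcc v hv
      rw [hEq]; exact Set.inter_subset_left
    have hbdB : ∀ v ∈ V, BddBelow (A v) := by
      intro v hv
      obtain ⟨a, b, _, hEq⟩ := hIcc v hv
      exact ⟨a, fun x hx => by rw [hEq] at hx; exact hx.2.1⟩
    have hbdA : ∀ v ∈ V, BddAbove (A v) := by
      intro v hv
      obtain ⟨a, b, _, hEq⟩ := hIcc v hv
      exact ⟨b, fun x hx => by rw [hEq] at hx; exact hx.2.2⟩
    have hcl : ∀ v ∈ V, IsClosed (A v) := by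
      intro v hv
      obtain ⟨a, b, _, hEq⟩ := hIcc v hv
      rw [hEq]; exact hX.inter isClosed_Icc
    have hmm : ∀ v ∈ V, sInf (A v) ∈ A v :=
      fun v hv => (hcl v hv).csInf_mem (hall v hv) (hbdB v hv)
    have hMM : ∀ v ∈ V, sSup (A v) ∈ A v :=
      fun v hv => (hcl v hv).csSup_mem (hall v hv) (hbdA v hv)
    have hmM : ∀ v ∈ V, sInf (A v) ≤ sSup (A v) :=
      fun v hv => le_csSup (hbdA v hv) (hmm v hv)
    -- "entirely left of" implies disjoint
    have hLtdisj : ∀ v ∈ V, ∀ w ∈ V, sSup (A v) < sInf (A w) → A v ∩ A w = ∅ := by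
      intro v hv w hw h
      ext x
      simp only [Set.mem_inter_iff, Set.mem_empty_iff_false, iff_false, not_and]
      intro hx1 hx2
      have := le_csSup (hbdA v hv) hx1
      have := csInf_le (hbdB w hw) hx2
      linarith
    -- disjoint implies one is entirely left of the other
    have hdisj : ∀ v ∈ V, ∀ w ∈ V, A v ∩ A w = ∅ →
        sSup (A v) < sInf (A w) ∨ sSup (A w) < sInf (A v) := by
      intro v hv w hw h
      by_contra hc
      push_neg at hc
      obtain ⟨h1, h2⟩ := hc
      rcases le_total (sInf (A v)) (sInf (A w)) with hle | hle
      · obtain ⟨a, b, hab, hEq⟩ := hIcc v hv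
        have hav : a ≤ sInf (A v) := by
          have h' := hmm v hv; rw [hEq] at h' ⊢; exact h'.2.1
        have hbv : sSup (A v) ≤ b := by
          have h' := hMM v hv; rw [hEq] at h' ⊢; exact h'.2.2
        have hmem : sInf (A w) ∈ A v := by
          rw [hEq]
          exact ⟨hsubX w hw (hmm w hw), le_trans hav hle, le_trans h1 hbv⟩
        have : sInf (A w) ∈ A v ∩ A w := ⟨hmem, hmm w hw⟩
        rw [h] at this; exact this
      · obtain ⟨a, b, hab, hEq⟩ := hIcc w hw
        have haw : a ≤ sInf (A w) := by
          have h' := hmm w hw; rw [hEq] at h' ⊢; exact h'.2.1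
        have hbw : sSup (A w) ≤ b := by
          have h' := hMM w hw; rw [hEq] at h' ⊢; exact h'.2.2
        have hmem : sInf (A v) ∈ A w := by
          rw [hEq]
          exact ⟨hsubX v hv (hmm v hv), le_trans haw hle, le_trans h2 hbw⟩
        have : sInf (A v) ∈ A v ∩ A w := ⟨hmm v hv, hmem⟩
        rw [h] at this; exact this
    -- agreeability forbids 3-chains
    have hchain : ∀ u ∈ V, ∀ v ∈ V, ∀ w ∈ V,
        sSup (A u) < sInf (A v) → sSup (A v) < sInf (A w) → False := by
      intro u hu v hv w hw h1 h2
      have huv := hLtdisj u hu v hv h1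
      have hvw := hLtdisj v hv w hw h2
      have huw := hLtdisj u hu w hw (lt_trans (lt_of_lt_of_le h1 (hmM v hv)) h2)
      have hne_uv : u ≠ v := by
        rintro rfl
        rw [Set.inter_self] at huv
        exact (hall u hu).ne_empty huv
      have hne_uw : u ≠ w := by
        rintro rfl
        rw [Set.inter_self] at huw
        exact (hall u hu).ne_empty huw
      have hne_vw : v ≠ w := by
        rintro rfl
        rw [Set.inter_self] at hvw
        exact (hall v hv).ne_empty hvw
      rcases hagree u hu v hv w hw hne_uv hne_uw hne_vw with h | h | h
      · rw [huv] at h; exact h.ne_empty rfl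
      · rw [huw] at h; exact h.ne_empty rfl
      · rw [hvw] at h; exact h.ne_empty rfl
    -- minimal elements and non-minimal elements each form a clique
    have hMnpair : ∀ v ∈ V.filter (fun v => ∀ u ∈ V, ¬ (sSup (A u) < sInf (A v))),
        ∀ w ∈ V.filter (fun v => ∀ u ∈ V, ¬ (sSup (A u) < sInf (A v))),
        (A v ∩ A w).Nonempty := by
      intro v hv w hw
      rw [Finset.mem_filter] at hv hw
      rw [Set.nonempty_iff_ne_empty]
      intro h
      rcases hdisj v hv.1 w hw.1 h with h' | h'
      · exact hw.2 v hv.1 h'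
      · exact hv.2 w hw.1 h'
    have hRspair : ∀ v ∈ V \ V.filter (fun v => ∀ u ∈ V, ¬ (sSup (A u) < sInf (A v))),
        ∀ w ∈ V \ V.filter (fun v => ∀ u ∈ V, ¬ (sSup (A u) < sInf (A v))),
        (A v ∩ A w).Nonempty := by
      intro v hv w hw
      rw [Finset.mem_sdiff, Finset.mem_filter] at hv hw
      rw [Set.nonempty_iff_ne_empty]
      intro h
      have hv' : ∃ u ∈ V, sSup (A u) < sInf (A v) := by
        by_contra hc; push_neg at hc
        exact hv.2 ⟨hv.1, fun u hu => not_lt.mpr (hc u hu)⟩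
      have hw' : ∃ u ∈ V, sSup (A u) < sInf (A w) := by
        by_contra hc; push_neg at hc
        exact hw.2 ⟨hw.1, fun u hu => not_lt.mpr (hc u hu)⟩
      rcases hdisj v hv.1 w hw.1 h with h' | h'
      · obtain ⟨u, hu, hlt⟩ := hv'
        exact hchain u hu v hv.1 w hw.1 hlt h'
      · obtain ⟨u, hu, hlt⟩ := hw'
        exact hchain u hu w hw.1 v hv.1 hlt h'
    have hMnsub : V.filter (fun v => ∀ u ∈ V, ¬ (sSup (A u) < sInf (A v))) ⊆ V :=
      Finset.filter_subset _ _
    have hcard : (V.filter (fun v => ∀ u ∈ V, ¬ (sSup (A u) < sInf (A v)))).card +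
        (V \ V.filter (fun v => ∀ u ∈ V, ¬ (sSup (A u) < sInf (A v)))).card = V.card := by
      rw [Finset.card_sdiff_of_subset hMnsub]
      have := Finset.card_le_card hMnsub
      omega
    rcases le_or_gt V.card
        (2 * (V.filter (fun v => ∀ u ∈ V, ¬ (sSup (A u) < sInf (A v)))).card) with hc | hc
    · have hSne : (V.filter (fun v => ∀ u ∈ V, ¬ (sSup (A u) < sInf (A v)))).Nonempty := by
        rw [← Finset.card_pos]; omega
      exact count _ hMnsub hc
        (helly_aux X hX A _ hSne (fun v hv => hIcc v (hMnsub hv)) hMnpair)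
    · have hc2 : V.card ≤
          2 * (V \ V.filter (fun v => ∀ u ∈ V, ¬ (sSup (A u) < sInf (A v)))).card := by
        omega
      have hSne : (V \ V.filter (fun v => ∀ u ∈ V, ¬ (sSup (A u) < sInf (A v)))).Nonempty := by
        rw [← Finset.card_pos]; omega
      exact count _ Finset.sdiff_subset hc2
        (helly_aux X hX A _ hSne (fun v hv => hIcc v (Finset.sdiff_subset hv)) hRspair)
  · -- some voter has empty approval set
    push_neg at hall
    obtain ⟨e, heV, heE⟩ := hall
    have hone : ∀ v ∈ V, v ≠ e → (A v).Nonempty := by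
      intro v hv hne
      by_contra h
      rw [Set.not_nonempty_iff_eq_empty] at h
      obtain ⟨w, hw⟩ : (V \ {e, v}).Nonempty := by
        rw [Finset.sdiff_nonempty]
        intro hsub
        have h1 := Finset.card_le_card hsub
        have h2 : ({e, v} : Finset ι).card ≤ 2 := Finset.card_insert_le _ _ |>.trans (by simp)
        omega
      rw [Finset.mem_sdiff, Finset.mem_insert, Finset.mem_singleton] at hw
      push_neg at hw
      rcases hagree e heV v hv w hw.1 hne.symm (Ne.symm hw.2.1) (Ne.symm hw.2.2) with
        h' | h' | h' <;> simp [heE, h] at h'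
    have hpair : ∀ v ∈ V.erase e, ∀ w ∈ V.erase e, (A v ∩ A w).Nonempty := by
      intro v hv w hw
      rw [Finset.mem_erase] at hv hw
      by_cases hvw : v = w
      · subst hvw
        rw [Set.inter_self]
        exact hone v hv.2 hv.1
      · rcases hagree e heV v hv.2 w hw.2 (Ne.symm hv.1) (Ne.symm hw.1) hvw with
          h' | h' | h'
        · simp [heE] at h'
        · simp [heE] at h'
        · exact h'
    have hA' : ∀ v ∈ V.erase e, ∃ a b : ℝ, a ≤ b ∧ A v = X ∩ Set.Icc a b := by
      intro v hv
      rw [Finset.mem_erase] at hv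
      rcases hA v hv.2 with h | h
      · exact absurd (hone v hv.2 hv.1) (by rw [h]; simp)
      · exact h
    have hSne : (V.erase e).Nonempty := by
      rw [← Finset.card_pos, Finset.card_erase_of_mem heV]; omega
    refine count (V.erase e) (Finset.erase_subset e V) ?_
      (helly_aux X hX A _ hSne hA' hpair)
    rw [Finset.card_erase_of_mem heV]; omega
end

section
/- The Agreeable Linear Society Theorem: let 2 ≤ k ≤ m be integers. In a (k,m)-agreeable linear society with n voters, there is a platform approved by at least n(k-1)/(m-1) of the voters. Precisely: if X is a closed subset of ℝ, V is a finite set of n ≥ m voters with approval sets A_v = X ∩ I_v (I_v empty or a closed bounded interval), and every m-element subset of V contains k voters whose approval sets have a common point, then there exists p ∈ X lying in at least n(k-1)/(m-1) of the sets A_v. -/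
/-!
Let `d` be the largest number of approval sets sharing a point; agreeability gives `k ≤ d`.
Ordering the nonempty approval sets by their least element, all earlier sets meeting a given one
contain its least element, so greedy colouring splits the voters into `d` classes of pairwise
disjoint approval sets. No `m` voters lie in `k - 1` classes (pigeonhole on the `k` agreeing
voters among them), while the `k - 1` largest classes hold at least a `(k - 1) / d` fraction of
all `n` voters. Hence `n (k - 1) ≤ d (m - 1)`.
-/

open Finset

theorem exists_greedy_coloring {ι β : Type*} [DecidableEq ι] [LinearOrder β]
    (r : ι → ι → Prop) [DecidableRel r] (hr : ∀ u v, r u v → r v u) (l : ι → β) (d : ℕ)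
    (T : Finset ι)
    (hT : ∀ v ∈ T, #{u ∈ T | u ≠ v ∧ r u v ∧ l u ≤ l v} < d) :
    ∃ f : ι → ℕ, (∀ v ∈ T, f v < d) ∧ ∀ u ∈ T, ∀ v ∈ T, u ≠ v → r u v → f u ≠ f v := by
  induction T using Finset.induction_on_max_value l with
  | empty => exact ⟨fun _ ↦ 0, by simp, by simp⟩
  | insert v T hvT hmax ih =>
    obtain ⟨f, hf_lt, hf⟩ := ih fun w hw ↦
      (card_le_card (filter_subset_filter _ (subset_insert v T))).trans_lt
        (hT w (mem_insert_of_mem hw))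
    set N : Finset ι := {u ∈ T | r u v}
    have hN : #(N.image f) < #(range d) := by
      rw [card_range]
      refine card_image_le.trans_lt <|
        (card_le_card fun u hu ↦ ?_).trans_lt (hT v (mem_insert_self v T))
      obtain ⟨huT, huv⟩ := mem_filter.1 hu
      exact mem_filter.2 ⟨mem_insert_of_mem huT, ne_of_mem_of_not_mem huT hvT, huv, hmax u huT⟩
    obtain ⟨c, hcd, hcN⟩ := exists_mem_notMem_of_card_lt_card hN
    have hnew : ∀ u ∈ T, r u v → f u ≠ c := fun u hu huv h ↦
      hcN (h ▸ mem_image_of_mem f (mem_filter.2 ⟨hu, huv⟩))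
    set g := Function.update f v c
    have hgv : g v = c := Function.update_self v c f
    have hgT : ∀ u ∈ T, g u = f u := fun u hu ↦
      Function.update_of_ne (ne_of_mem_of_not_mem hu hvT) c f
    refine ⟨g, fun w hw ↦ ?_, fun u hu w hw huw huw' ↦ ?_⟩
    · rcases mem_insert.1 hw with rfl | hw
      · exact hgv ▸ mem_range.1 hcd
      · exact hgT w hw ▸ hf_lt w hw
    · rcases mem_insert.1 hu with rfl | hu <;> rcases mem_insert.1 hw with hwv | hw
      · exact absurd hwv.symm huw
      · rw [hgv, hgT w hw]
        exact (hnew w hw (hr _ _ huw')).symm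
      · rw [hwv, hgv, hgT u hu]
        exact hnew u hu (hwv ▸ huw')
      · rw [hgT u hu, hgT w hw]
        exact hf u hu w hw huw huw'

theorem exists_subset_card_eq_mul_sum_le {γ : Type*} (s : Finset γ) (w : γ → ℕ) {j : ℕ}
    (hj : j ≤ #s) : ∃ t ⊆ s, #t = j ∧ j * ∑ i ∈ s, w i ≤ #s * ∑ i ∈ t, w i := by
  classical
  obtain ⟨t, ht, hmax⟩ := (powersetCard j s).exists_max_image (fun t ↦ ∑ i ∈ t, w i)
    (powersetCard_nonempty.2 hj)
  obtain ⟨hts, htj⟩ := mem_powersetCard.1 ht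
  have hswap : ∀ i ∈ s \ t, ∀ i' ∈ t, w i ≤ w i' := by
    intro i hi i' hi'
    obtain ⟨his, hit⟩ := mem_sdiff.1 hi
    have hit' : i ∉ t.erase i' := fun h ↦ hit (mem_of_mem_erase h)
    have hswap_le := hmax (insert i (t.erase i')) <| mem_powersetCard.2
      ⟨insert_subset his ((erase_subset i' t).trans hts),
        by rw [card_insert_of_notMem hit', card_erase_add_one hi', htj]⟩
    rw [sum_insert hit'] at hswap_le
    have hsplit := sum_erase_add t w hi'
    omega
  have hout : ∀ i ∈ s \ t, j * w i ≤ ∑ i' ∈ t, w i' := fun i hi ↦ by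
    simpa [htj] using card_nsmul_le_sum t w (w i) (hswap i hi)
  refine ⟨t, hts, htj, ?_⟩
  calc j * ∑ i ∈ s, w i = ∑ i ∈ s \ t, j * w i + j * ∑ i ∈ t, w i := by
        rw [mul_sum, mul_sum, sum_sdiff hts]
    _ ≤ #(s \ t) * ∑ i ∈ t, w i + j * ∑ i ∈ t, w i := by
        gcongr; simpa using sum_le_card_nsmul _ _ _ hout
    _ = #s * ∑ i ∈ t, w i := by
        rw [card_sdiff_of_subset hts, ← add_mul, htj, Nat.sub_add_cancel hj]

open Classical in
theorem exists_forall_card_filter_mem_le {ι α : Type*} [Nonempty α] (V : Finset ι)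
    (A : ι → Set α) : ∃ p, ∀ q, #{v ∈ V | q ∈ A v} ≤ #{v ∈ V | p ∈ A v} := by
  have hbdd : BddAbove (Set.range fun p ↦ #{v ∈ V | p ∈ A v}) :=
    ⟨#V, by rintro _ ⟨p, rfl⟩; exact card_filter_le _ _⟩
  obtain ⟨p, hp⟩ := Nat.sSup_mem (Set.range_nonempty _) hbdd
  exact ⟨p, fun q ↦ (le_csSup hbdd ⟨q, rfl⟩).trans_eq hp.symm⟩

section Intervals

variable {α : Type*} [ConditionallyCompleteLinearOrder α] [TopologicalSpace α] [OrderTopology α]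

theorem csInf_mem_of_csInf_le {X s t : Set α} {a b : α} (hs : s = X ∩ Set.Icc a b)
    (ht : IsCompact t) (htX : t ⊆ X) (hst : (s ∩ t).Nonempty) (hle : sInf s ≤ sInf t) :
    sInf t ∈ s := by
  obtain ⟨y, hys, hyt⟩ := hst
  subst hs
  refine ⟨htX (ht.sInf_mem ⟨y, hyt⟩), ?_, (csInf_le ht.bddBelow hyt).trans hys.2.2⟩
  exact (le_csInf ⟨y, hys⟩ fun x hx ↦ hx.2.1).trans hle

open Classical in
theorem exists_coloring_of_forall_card_filter_mem_le {ι : Type*} {X : Set α} (hX : IsClosed X)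
    (V : Finset ι) (A : ι → Set α) (hA : ∀ v ∈ V, ∃ a b, A v = X ∩ Set.Icc a b) {d : ℕ}
    (hd : 0 < d) (hdepth : ∀ p, #{v ∈ V | p ∈ A v} ≤ d) :
    ∃ f : ι → ℕ, (∀ v ∈ V, f v < d) ∧
      ∀ u ∈ V, ∀ v ∈ V, u ≠ v → (A u ∩ A v).Nonempty → f u ≠ f v := by
  refine exists_greedy_coloring (fun u v ↦ (A u ∩ A v).Nonempty)
    (fun u v h ↦ by rwa [Set.inter_comm]) (fun v ↦ sInf (A v)) d V
    fun v hv ↦ ?_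
  obtain ⟨a, b, hAv⟩ := hA v hv
  have hcpt : IsCompact (A v) := hAv ▸ isCompact_Icc.inter_left hX
  rcases (A v).eq_empty_or_nonempty with hempty | hne
  · simpa [hempty] using hd
  refine (card_lt_card ((ssubset_iff_of_subset fun u hu ↦ ?_).2 ⟨v, ?_, ?_⟩)).trans_le
    (hdepth (sInf (A v)))
  · obtain ⟨huV, -, hmeet, hle⟩ := mem_filter.1 hu
    obtain ⟨a', b', hAu⟩ := hA u huV
    exact mem_filter.2 ⟨huV, csInf_mem_of_csInf_le hAu hcpt
      (hAv ▸ Set.inter_subset_left) hmeet hle⟩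
  · exact mem_filter.2 ⟨hv, hcpt.sInf_mem hne⟩
  · simp

end Intervals

def IsAgreeable {ι α : Type*} (k m : ℕ) (V : Finset ι) (A : ι → Set α) : Prop :=
  ∀ W ⊆ V, #W = m → ∃ K ⊆ W, #K = k ∧ (⋂ v ∈ K, A v).Nonempty

namespace IsAgreeable

variable {ι α : Type*} {k m : ℕ} {V : Finset ι} {A : ι → Set α}

open Classical in
theorem exists_le_card_filter_mem (h : IsAgreeable k m V A) (hm : m ≤ #V) :
    ∃ p, k ≤ #{v ∈ V | p ∈ A v} := by
  obtain ⟨W, hWV, hW⟩ := exists_subset_card_eq hm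
  obtain ⟨K, hKW, hK, p, hp⟩ := h W hWV hW
  exact ⟨p, hK ▸ card_le_card fun v hv ↦ mem_filter.2 ⟨hWV (hKW hv), Set.mem_iInter₂.1 hp v hv⟩⟩

theorem card_filter_mem_lt {γ : Type*} [DecidableEq γ] (h : IsAgreeable k m V A) (f : ι → γ)
    (hf : ∀ u ∈ V, ∀ v ∈ V, u ≠ v → (A u ∩ A v).Nonempty → f u ≠ f v) (T : Finset γ)
    (hT : #T < k) : #{v ∈ V | f v ∈ T} < m := by
  by_contra! hm
  obtain ⟨W, hWV, hW⟩ := exists_subset_card_eq hm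
  obtain ⟨K, hKW, hK, p, hp⟩ := h W (hWV.trans (filter_subset _ _)) hW
  have hKV : ∀ v ∈ K, v ∈ V ∧ f v ∈ T := fun v hv ↦ mem_filter.1 (hWV (hKW hv))
  obtain ⟨u, hu, w, hw, huw, hfuw⟩ :=
    exists_ne_map_eq_of_card_lt_of_maps_to (hK ▸ hT) fun v hv ↦ (hKV v hv).2
  exact hf u (hKV u hu).1 w (hKV w hw).1 huw
    ⟨p, Set.mem_iInter₂.1 hp u hu, Set.mem_iInter₂.1 hp w hw⟩ hfuw

theorem sub_one_mul_card_le {γ : Type*} [DecidableEq γ] (h : IsAgreeable k m V A) (hk : 1 ≤ k)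
    (C : Finset γ) (hkC : k - 1 ≤ #C) (f : ι → γ) (hfC : ∀ v ∈ V, f v ∈ C)
    (hf : ∀ u ∈ V, ∀ v ∈ V, u ≠ v → (A u ∩ A v).Nonempty → f u ≠ f v) :
    (k - 1) * #V ≤ #C * (m - 1) := by
  obtain ⟨T, -, hTk, hsum⟩ := exists_subset_card_eq_mul_sum_le C (fun c ↦ #{v ∈ V | f v = c}) hkC
  rw [← card_eq_sum_card_fiberwise hfC, sum_card_fiberwise_eq_card_filter] at hsum
  have hT := h.card_filter_mem_lt f hf T (by omega)
  calc (k - 1) * #V ≤ #C * #{v ∈ V | f v ∈ T} := hsum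
    _ ≤ #C * (m - 1) := Nat.mul_le_mul_left _ (by omega)

end IsAgreeable

/-- **The Agreeable Linear Society Theorem.**
Let `2 ≤ k ≤ m`.  In a `(k,m)`-agreeable linear society with `n ≥ m` voters
(every `m`-element set of voters contains `k` voters whose approval sets have a
common point), there is a platform approved by at least `n * (k-1) / (m-1)`
of the voters. -/
theorem agreeable_linear_society_km
    {ι : Type*} (k m : ℕ) (hk : 2 ≤ k) (hkm : k ≤ m)
    (X : Set ℝ) (hX : IsClosed X)
    (V : Finset ι) (n : ℕ) (hn : V.card = n) (hnm : m ≤ n)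
    (A : ι → Set ℝ)
    (hA : ∀ v ∈ V, A v = ∅ ∨ ∃ a b : ℝ, a ≤ b ∧ A v = X ∩ Set.Icc a b)
    (hagree : ∀ W ⊆ V, W.card = m →
      ∃ K ⊆ W, K.card = k ∧ (⋂ v ∈ K, A v).Nonempty) :
    ∃ p ∈ X, ((n : ℝ) * (k - 1)) / (m - 1) ≤ {v ∈ (V : Set ι) | p ∈ A v}.ncard := by
  classical
  have hagree : IsAgreeable k m V A := hagree
  have hA' : ∀ v ∈ V, ∃ a b, A v = X ∩ Set.Icc a b := fun v hv ↦
    (hA v hv).elim (fun h ↦ ⟨1, 0, by simp [h]⟩) fun ⟨a, b, _, h⟩ ↦ ⟨a, b, h⟩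
  obtain ⟨p, hp⟩ := exists_forall_card_filter_mem_le V A
  set d := #{v ∈ V | p ∈ A v}
  obtain ⟨x, hx⟩ := hagree.exists_le_card_filter_mem (hn ▸ hnm)
  have hkd : k ≤ d := hx.trans (hp x)
  obtain ⟨f, hf_lt, hf⟩ := exists_coloring_of_forall_card_filter_mem_le hX V A hA' (by omega) hp
  have hcount := hagree.sub_one_mul_card_le (by omega) (range d) (by simp; omega) f
    (fun v hv ↦ mem_range.2 (hf_lt v hv)) hf
  obtain ⟨v, hv, hpv⟩ : ∃ v ∈ V, p ∈ A v :=
    filter_nonempty_iff.1 (card_pos.1 (show 0 < d by omega))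
  obtain ⟨a, b, hAv⟩ := hA' v hv
  refine ⟨p, (hAv ▸ hpv).1, ?_⟩
  have hset : {v ∈ (V : Set ι) | p ∈ A v} = ↑({v ∈ V | p ∈ A v}) := by ext; simp
  rw [hset, Set.ncard_coe_finset, div_le_iff₀ (by norm_num; omega)]
  rw [card_range, hn] at hcount
  have hcast := (Nat.cast_le (α := ℝ)).2 hcount
  push_cast [Nat.cast_sub (by omega : 1 ≤ k), Nat.cast_sub (by omega : 1 ≤ m)] at hcast
  linarith
end

section
/- Let 2 ≤ k ≤ m be integers and write m-1 = (k-1)q + ρ with integers q ≥ 1 and 0 ≤ ρ ≤ k-2. If S is a (k,m)-agreeable linear society with n voters (so the spectrum X is a closed subset of ℝ, each approval set is A_v = X ∩ I_v with I_v empty or a closed bounded interval, n ≥ m, and every m voters include k whose approval sets share a common point), then there exists a point p ∈ X contained in at least ⌈(n-ρ)/q⌉ of the approval sets. -/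
open Finset

private lemma inf_mem_of_form {X : Set ℝ} (hX : IsClosed X) {A : Set ℝ} {a b : ℝ}
    (hform : A = X ∩ Set.Icc a b) (hne : A.Nonempty) : sInf A ∈ A := by
  have hclosed : IsClosed A := by rw [hform]; exact hX.inter isClosed_Icc
  have hbdd : BddBelow A := ⟨a, fun x hx => by rw [hform] at hx; exact hx.2.1⟩
  exact hclosed.csInf_mem hne hbdd

/-- If two interval-form sets intersect and `sInf Au ≤ sInf Av`, then `sInf Av ∈ Au`. -/
private lemma inf_mem_of_inter {X : Set ℝ} (hX : IsClosed X) {Au Av : Set ℝ} {a b c d : ℝ}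
    (hu : Au = X ∩ Set.Icc a b) (hv : Av = X ∩ Set.Icc c d)
    (hvne : Av.Nonempty) (hint : (Au ∩ Av).Nonempty) (hle : sInf Au ≤ sInf Av) :
    sInf Av ∈ Au := by
  obtain ⟨x, hxu, hxv⟩ := hint
  have hAune : Au.Nonempty := ⟨x, hxu⟩
  have hmemv : sInf Av ∈ Av := inf_mem_of_form hX hv hvne
  have h1 : a ≤ sInf Au := le_csInf hAune (fun y hy => by rw [hu] at hy; exact hy.2.1)
  have h2 : sInf Av ≤ x := csInf_le ⟨c, fun y hy => by rw [hv] at hy; exact hy.2.1⟩ hxv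
  have h3 : x ≤ b := by rw [hu] at hxu; exact hxu.2.2
  have h4 : sInf Av ∈ X := by
    have hsub : Av ⊆ X := by rw [hv]; exact Set.inter_subset_left
    exact hsub hmemv
  rw [hu]
  exact ⟨h4, le_trans h1 hle, le_trans h2 h3⟩

/-- Greedy chain-partition: members of the partition cover `S`, are pairwise
disjoint, and each class consists of pairwise `A`-disjoint voters; the number of
classes is at most `a`. -/
private lemma exists_chain_partition {ι : Type*} [DecidableEq ι] (X : Set ℝ) (hX : IsClosed X)
    (V : Finset ι) (A : ι → Set ℝ) (a : ℕ)
    (ha : ∀ v ∈ V, (A v).Nonempty → ∀ T ⊆ V, (∀ u ∈ T, sInf (A v) ∈ A u) → T.card ≤ a) :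
    ∀ S : Finset ι, S ⊆ V → (∀ v ∈ S, (A v).Nonempty) →
      (∀ v ∈ S, ∃ c d : ℝ, A v = X ∩ Set.Icc c d) →
      ∃ 𝒞 : Finset (Finset ι),
        (∀ C ∈ 𝒞, C.Nonempty) ∧
        (∀ C ∈ 𝒞, C ⊆ S) ∧
        (∀ C ∈ 𝒞, ∀ u ∈ C, ∀ w ∈ C, u ≠ w → A u ∩ A w = ∅) ∧
        (∀ C ∈ 𝒞, ∀ D ∈ 𝒞, C ≠ D → Disjoint C D) ∧
        (∀ x ∈ S, ∃ C ∈ 𝒞, x ∈ C) ∧ 𝒞.card ≤ a := by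
  classical
  have H : ∀ N : ℕ, ∀ S : Finset ι, S.card = N → S ⊆ V → (∀ v ∈ S, (A v).Nonempty) →
      (∀ v ∈ S, ∃ c d : ℝ, A v = X ∩ Set.Icc c d) →
      ∃ 𝒞 : Finset (Finset ι),
        (∀ C ∈ 𝒞, C.Nonempty) ∧
        (∀ C ∈ 𝒞, C ⊆ S) ∧
        (∀ C ∈ 𝒞, ∀ u ∈ C, ∀ w ∈ C, u ≠ w → A u ∩ A w = ∅) ∧
        (∀ C ∈ 𝒞, ∀ D ∈ 𝒞, C ≠ D → Disjoint C D) ∧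
        (∀ x ∈ S, ∃ C ∈ 𝒞, x ∈ C) ∧ 𝒞.card ≤ a := by
    intro N
    induction N using Nat.strong_induction_on with
    | _ N ih =>
      intro S hScard hSV hSne hSform
      rcases S.eq_empty_or_nonempty with rfl | hS
      · exact ⟨∅, by simp, by simp, by simp, by simp, by simp, by simp⟩
      obtain ⟨v, hvS, hvmax⟩ := Finset.exists_max_image S (fun v => sInf (A v)) hS
      set S' := S.erase v with hS'
      have hS'card : S'.card < N := by
        rw [← hScard]; exact Finset.card_erase_lt_of_mem hvS
      obtain ⟨𝒞, h1, h2, h3, h4, h5, h6⟩ := ih S'.card hS'card S' rfl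
        (fun u hu => hSV (Finset.mem_of_mem_erase hu))
        (fun u hu => hSne u (Finset.mem_of_mem_erase hu))
        (fun u hu => hSform u (Finset.mem_of_mem_erase hu))
      have hvV : v ∈ V := hSV hvS
      have hvne : (A v).Nonempty := hSne v hvS
      obtain ⟨cv, dv, hvform⟩ := hSform v hvS
      have hintermem : ∀ u ∈ S', (A u ∩ A v).Nonempty → sInf (A v) ∈ A u := by
        intro u huS' hint
        obtain ⟨cu, du, huform⟩ := hSform u (Finset.mem_of_mem_erase huS')
        exact inf_mem_of_inter hX huform hvform hvne hint
          (hvmax u (Finset.mem_of_mem_erase huS'))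
      by_cases hcase : ∃ C ∈ 𝒞, ∀ u ∈ C, A u ∩ A v = ∅
      · -- attach v to an existing chain C
        obtain ⟨C, hC𝒞, hCdisj⟩ := hcase
        refine ⟨insert (insert v C) (𝒞.erase C), ?_, ?_, ?_, ?_, ?_, ?_⟩
        · intro D hD
          rcases Finset.mem_insert.mp hD with rfl | hD
          · exact ⟨v, Finset.mem_insert_self _ _⟩
          · exact h1 D (Finset.mem_of_mem_erase hD)
        · intro D hD
          rcases Finset.mem_insert.mp hD with rfl | hD
          · intro x hx
            rcases Finset.mem_insert.mp hx with rfl | hx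
            · exact hvS
            · exact Finset.mem_of_mem_erase (h2 C hC𝒞 hx)
          · exact fun x hx => Finset.mem_of_mem_erase (h2 D (Finset.mem_of_mem_erase hD) hx)
        · intro D hD
          rcases Finset.mem_insert.mp hD with rfl | hD
          · intro u hu w hw huw
            rcases Finset.mem_insert.mp hu with h | hu'
            · rcases Finset.mem_insert.mp hw with h2 | hw'
              · exact absurd (h.trans h2.symm) huw
              · rw [h, Set.inter_comm]; exact hCdisj w hw'
            · rcases Finset.mem_insert.mp hw with h2 | hw'
              · rw [h2]; exact hCdisj u hu'
              · exact h3 C hC𝒞 u hu' w hw' huw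
          · exact h3 D (Finset.mem_of_mem_erase hD)
        · have hvnotin : ∀ D ∈ 𝒞, v ∉ D := by
            intro D hD hvD
            exact Finset.notMem_erase v S (h2 D hD hvD)
          intro D hD E hE hDE
          rcases Finset.mem_insert.mp hD with rfl | hD <;>
            rcases Finset.mem_insert.mp hE with rfl | hE
          · exact absurd rfl hDE
          · have hE' := Finset.mem_of_mem_erase hE
            have hCE : C ≠ E := fun h => (Finset.ne_of_mem_erase hE) h.symm
            rw [Finset.disjoint_insert_left]
            exact ⟨hvnotin E hE', h4 C hC𝒞 E hE' hCE⟩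
          · have hD' := Finset.mem_of_mem_erase hD
            have hCD : C ≠ D := fun h => (Finset.ne_of_mem_erase hD) h.symm
            rw [Finset.disjoint_insert_right]
            exact ⟨hvnotin D hD', h4 D hD' C hC𝒞 (Ne.symm hCD)⟩
          · exact h4 D (Finset.mem_of_mem_erase hD) E (Finset.mem_of_mem_erase hE) hDE
        · intro x hxS
          by_cases hxv : x = v
          · exact ⟨insert v C, Finset.mem_insert_self _ _, hxv ▸ Finset.mem_insert_self _ _⟩
          · obtain ⟨D, hD, hxD⟩ := h5 x (Finset.mem_erase.mpr ⟨hxv, hxS⟩)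
            by_cases hDC : D = C
            · exact ⟨insert v C, Finset.mem_insert_self _ _,
                Finset.mem_insert_of_mem (hDC ▸ hxD)⟩
            · exact ⟨D, Finset.mem_insert_of_mem (Finset.mem_erase.mpr ⟨hDC, hD⟩), hxD⟩
        · calc (insert (insert v C) (𝒞.erase C)).card
              ≤ (𝒞.erase C).card + 1 := Finset.card_insert_le _ _
            _ = 𝒞.card - 1 + 1 := by rw [Finset.card_erase_of_mem hC𝒞]
            _ = 𝒞.card := Nat.succ_pred_eq_of_pos (Finset.card_pos.mpr ⟨C, hC𝒞⟩)
            _ ≤ a := h6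
      · -- every chain meets A v; start a new chain {v}
        push_neg at hcase
        have hwit : ∀ C ∈ 𝒞, ∃ u ∈ C, (A u ∩ A v).Nonempty := by
          intro C hC
          obtain ⟨u, huC, hune⟩ := hcase C hC
          exact ⟨u, huC, hune⟩
        set W := 𝒞.biUnion (fun C => C.filter (fun u => sInf (A v) ∈ A u)) with hW
        have hWsub : W ⊆ S' := by
          intro x hx
          obtain ⟨C, hC, hxC⟩ := Finset.mem_biUnion.mp hx
          exact h2 C hC (Finset.mem_filter.mp hxC).1
        have hWcard : 𝒞.card ≤ W.card := by
          rw [hW, Finset.card_biUnion]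
          · calc 𝒞.card = ∑ _C ∈ 𝒞, 1 := by simp
              _ ≤ ∑ C ∈ 𝒞, (C.filter (fun u => sInf (A v) ∈ A u)).card := by
                  apply Finset.sum_le_sum
                  intro C hC
                  obtain ⟨u, huC, hint⟩ := hwit C hC
                  have : sInf (A v) ∈ A u := hintermem u (h2 C hC huC) hint
                  exact Finset.card_pos.mpr ⟨u, Finset.mem_filter.mpr ⟨huC, this⟩⟩
          · intro C hC D hD hCD
            exact Finset.disjoint_filter_filter (h4 C hC D hD hCD)
        have hTcard : (insert v W).card ≤ a := by
          apply ha v hvV hvne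
          · intro x hx
            rcases Finset.mem_insert.mp hx with rfl | hx
            · exact hvV
            · exact hSV (Finset.mem_of_mem_erase (hWsub hx))
          · intro u hu
            rcases Finset.mem_insert.mp hu with rfl | hu
            · exact inf_mem_of_form hX hvform hvne
            · obtain ⟨C, hC, huC⟩ := Finset.mem_biUnion.mp hu
              exact (Finset.mem_filter.mp huC).2
        have hvnotW : v ∉ W := fun h => Finset.notMem_erase v S (hWsub h)
        have hcount : 𝒞.card + 1 ≤ a := by
          calc 𝒞.card + 1 ≤ W.card + 1 := by omega
            _ = (insert v W).card := (Finset.card_insert_of_notMem hvnotW).symm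
            _ ≤ a := hTcard
        refine ⟨insert {v} 𝒞, ?_, ?_, ?_, ?_, ?_, ?_⟩
        · intro D hD
          rcases Finset.mem_insert.mp hD with rfl | hD
          · exact ⟨v, Finset.mem_singleton_self v⟩
          · exact h1 D hD
        · intro D hD
          rcases Finset.mem_insert.mp hD with rfl | hD
          · intro x hx; rw [Finset.mem_singleton] at hx; exact hx ▸ hvS
          · exact fun x hx => Finset.mem_of_mem_erase (h2 D hD hx)
        · intro D hD
          rcases Finset.mem_insert.mp hD with rfl | hD
          · intro u hu w hw huw
            rw [Finset.mem_singleton] at hu hw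
            exact absurd (hu.trans hw.symm) huw
          · exact h3 D hD
        · intro D hD E hE hDE
          have hvnotin : ∀ D ∈ 𝒞, v ∉ D := by
            intro D hD hvD
            exact Finset.notMem_erase v S (h2 D hD hvD)
          rcases Finset.mem_insert.mp hD with rfl | hD <;>
            rcases Finset.mem_insert.mp hE with rfl | hE
          · exact absurd rfl hDE
          · exact Finset.disjoint_singleton_left.mpr (hvnotin E hE)
          · exact Finset.disjoint_singleton_right.mpr (hvnotin D hD)
          · exact h4 D hD E hE hDE
        · intro x hxS
          by_cases hxv : x = v
          · exact ⟨{v}, Finset.mem_insert_self _ _, by simp [hxv]⟩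
          · obtain ⟨D, hD, hxD⟩ := h5 x (Finset.mem_erase.mpr ⟨hxv, hxS⟩)
            exact ⟨D, Finset.mem_insert_of_mem hD, hxD⟩
        · calc (insert {v} 𝒞).card ≤ 𝒞.card + 1 := Finset.card_insert_le _ _
            _ ≤ a := hcount
  exact fun S => H S.card S rfl

/-- Selecting the `j` heaviest elements of a finset. -/
private lemma exists_top_subset {α : Type*} [DecidableEq α] (s : Finset α) (w : α → ℕ) :
    ∀ j, j ≤ s.card → ∃ t ⊆ s, t.card = j ∧ ∀ x ∈ s, x ∉ t → ∀ y ∈ t, w x ≤ w y := by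
  intro j
  induction j with
  | zero => exact fun _ => ⟨∅, Finset.empty_subset _, Finset.card_empty, by simp⟩
  | succ i ih =>
    intro h
    obtain ⟨t, hts, htc, htop⟩ := ih (Nat.le_of_succ_le h)
    have hne : (s \ t).Nonempty := by
      rw [← Finset.card_pos, Finset.card_sdiff_of_subset hts, htc]
      omega
    obtain ⟨x, hx, hmax⟩ := Finset.exists_max_image (s \ t) w hne
    have hxs : x ∈ s := (Finset.mem_sdiff.mp hx).1
    have hxt : x ∉ t := (Finset.mem_sdiff.mp hx).2
    refine ⟨insert x t, ?_, ?_, ?_⟩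
    · exact Finset.insert_subset hxs hts
    · rw [Finset.card_insert_of_notMem hxt, htc]
    · intro z hzs hzt y hy
      have hznt : z ∉ t := fun h' => hzt (Finset.mem_insert_of_mem h')
      rcases Finset.mem_insert.mp hy with rfl | hy
      · exact hmax z (Finset.mem_sdiff.mpr ⟨hzs, hznt⟩)
      · exact htop z hzs hznt y hy

/-- Let `2 ≤ k ≤ m` and write `m - 1 = (k-1)q + ρ` with `q ≥ 1`, `0 ≤ ρ ≤ k-2`.
In a `(k,m)`-agreeable linear society with `n ≥ m` voters there is a platform
contained in at least `⌈(n - ρ)/q⌉` of the approval sets. -/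
theorem agreeable_linear_society_ceil_bound
    {ι : Type*} (k m q ρ : ℕ) (hk : 2 ≤ k) (hkm : k ≤ m)
    (hq : 1 ≤ q) (hρ : ρ ≤ k - 2) (hdiv : m - 1 = (k - 1) * q + ρ)
    (X : Set ℝ) (hX : IsClosed X)
    (V : Finset ι) (n : ℕ) (hn : V.card = n) (hnm : m ≤ n)
    (A : ι → Set ℝ)
    (hA : ∀ v ∈ V, A v = ∅ ∨ ∃ a b : ℝ, a ≤ b ∧ A v = X ∩ Set.Icc a b)
    (hagree : ∀ W ⊆ V, W.card = m →
      ∃ K ⊆ W, K.card = k ∧ (⋂ v ∈ K, A v).Nonempty) :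
    ∃ p ∈ X, ⌈((n : ℚ) - ρ) / q⌉ ≤ ({v ∈ (V : Set ι) | p ∈ A v}.ncard : ℤ) := by
  classical
  set K1 := k - 1 with hK1
  have hm : m = K1 * q + ρ + 1 := by omega
  have hform : ∀ v ∈ V, (A v).Nonempty → ∃ c d : ℝ, A v = X ∩ Set.Icc c d := by
    intro v hv hvne
    rcases hA v hv with h | ⟨a, b, _, h⟩
    · exact absurd h (Set.nonempty_iff_ne_empty.mp hvne)
    · exact ⟨a, b, h⟩
  set NE := V.filter (fun v => (A v).Nonempty) with hNE
  set f : ι → ℕ := fun v => (V.filter (fun u => sInf (A v) ∈ A u)).card with hf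
  set a := NE.sup f with haa
  have ha : ∀ v ∈ V, (A v).Nonempty → ∀ T ⊆ V, (∀ u ∈ T, sInf (A v) ∈ A u) → T.card ≤ a := by
    intro v hv hvne T hTV hT
    have h1 : T ⊆ V.filter (fun u => sInf (A v) ∈ A u) := by
      intro u hu; exact Finset.mem_filter.mpr ⟨hTV hu, hT u hu⟩
    calc T.card ≤ f v := Finset.card_le_card h1
      _ ≤ a := Finset.le_sup (Finset.mem_filter.mpr ⟨hv, hvne⟩)
  obtain ⟨𝒞, h1, h2, h3, h4, h5, h6⟩ := exists_chain_partition X hX V A a ha NE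
    (Finset.filter_subset _ _)
    (fun v hv => (Finset.mem_filter.mp hv).2)
    (fun v hv => hform v (Finset.mem_filter.mp hv).1 (Finset.mem_filter.mp hv).2)
  -- generic: a common-point k-set injects into distinct chains of any subfamily
  have chain_bound : ∀ (𝒯 : Finset (Finset ι)), 𝒯 ⊆ 𝒞 → ∀ (K : Finset ι) (pt : ℝ),
      (∀ u ∈ K, pt ∈ A u) → (∀ u ∈ K, ∃ C ∈ 𝒯, u ∈ C) → K.card ≤ 𝒯.card := by
    intro 𝒯 h𝒯 K pt hpt hcov
    set g : ι → Finset ι := fun u => if h : ∃ C ∈ 𝒯, u ∈ C then h.choose else ∅ with hg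
    have hgspec : ∀ u ∈ K, g u ∈ 𝒯 ∧ u ∈ g u := by
      intro u hu
      have h := hcov u hu
      simp only [hg, dif_pos h]
      exact ⟨h.choose_spec.1, h.choose_spec.2⟩
    apply Finset.card_le_card_of_injOn g (fun u hu => (hgspec u hu).1)
    intro u hu w hw hgu
    by_contra huw
    have hdisj := h3 (g u) (h𝒯 (hgspec u hu).1) u (hgspec u hu).2 w (hgu ▸ (hgspec w hw).2) huw
    exact absurd hdisj (Set.nonempty_iff_ne_empty.mp ⟨pt, hpt u hu, hpt w hw⟩)
  -- r ≥ k
  have hkr : k ≤ 𝒞.card := by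
    obtain ⟨W0, hW0V, hW0card⟩ := Finset.exists_subset_card_eq (hn ▸ hnm)
    obtain ⟨K, hKW, hKcard, pt, hpt⟩ := hagree W0 hW0V hW0card
    have hptmem : ∀ u ∈ K, pt ∈ A u := fun u hu => by
      have := Set.mem_iInter₂.mp hpt u hu; exact this
    rw [← hKcard]
    apply chain_bound 𝒞 (subset_refl _) K pt hptmem
    intro u hu
    apply h5
    exact Finset.mem_filter.mpr ⟨hW0V (hKW hu), ⟨pt, hptmem u hu⟩⟩
  -- top K1 chains
  obtain ⟨𝒯, h𝒯𝒞, h𝒯card, h𝒯top⟩ := exists_top_subset 𝒞 Finset.card K1 (by omega)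
  set E := V \ NE with hE
  have hEchains : Disjoint E (𝒯.biUnion id) := by
    rw [Finset.disjoint_biUnion_right]
    intro C hC
    apply Finset.disjoint_left.mpr
    intro x hxE hxC
    exact (Finset.mem_sdiff.mp hxE).2 (h2 C (h𝒯𝒞 hC) hxC)
  set U := E ∪ 𝒯.biUnion id with hU
  have hUV : U ⊆ V := by
    apply Finset.union_subset (Finset.sdiff_subset)
    intro x hx
    obtain ⟨C, hC, hxC⟩ := Finset.mem_biUnion.mp hx
    exact (Finset.filter_subset _ _) (h2 C (h𝒯𝒞 hC) hxC)
  have hdisjT : ∀ C ∈ 𝒯, ∀ D ∈ 𝒯, C ≠ D → Disjoint C D :=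
    fun C hC D hD hCD => h4 C (h𝒯𝒞 hC) D (h𝒯𝒞 hD) hCD
  have hb : (𝒯.biUnion id).card = ∑ C ∈ 𝒯, C.card := Finset.card_biUnion hdisjT
  have hUcard : U.card = E.card + ∑ C ∈ 𝒯, C.card := by
    rw [hU, Finset.card_union_of_disjoint hEchains, hb]
  -- |U| < m
  have hUm : U.card + 1 ≤ m := by
    by_contra hcon
    push_neg at hcon
    have : m ≤ U.card := by omega
    obtain ⟨W, hWU, hWcard⟩ := Finset.exists_subset_card_eq this
    obtain ⟨K, hKW, hKcard, pt, hpt⟩ := hagree W (hWU.trans hUV) hWcard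
    have hptmem : ∀ u ∈ K, pt ∈ A u := fun u hu => Set.mem_iInter₂.mp hpt u hu
    have hcov : ∀ u ∈ K, ∃ C ∈ 𝒯, u ∈ C := by
      intro u hu
      have huU : u ∈ U := hWU (hKW hu)
      rcases Finset.mem_union.mp huU with huE | huB
      · exact absurd (Finset.mem_filter.mpr ⟨(Finset.mem_sdiff.mp huE).1, ⟨pt, hptmem u hu⟩⟩)
          (Finset.mem_sdiff.mp huE).2
      · exact Finset.mem_biUnion.mp huB
    have := chain_bound 𝒯 h𝒯𝒞 K pt hptmem hcov
    omega
  have hsum𝒯 : E.card + ∑ C ∈ 𝒯, C.card ≤ K1 * q + ρ := by omega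
  -- some chain in 𝒯 has card ≤ q
  have hT0 : ∃ T0 ∈ 𝒯, T0.card ≤ q := by
    by_contra hcon
    push_neg at hcon
    have : K1 * (q + 1) ≤ ∑ C ∈ 𝒯, C.card := by
      calc K1 * (q + 1) = ∑ _C ∈ 𝒯, (q + 1) := by rw [Finset.sum_const, h𝒯card, smul_eq_mul]
        _ ≤ ∑ C ∈ 𝒯, C.card := Finset.sum_le_sum (fun C hC => hcon C hC)
    have hρK1 : ρ + 1 ≤ K1 := by omega
    nlinarith [hsum𝒯]
  obtain ⟨T0, hT0𝒯, hT0q⟩ := hT0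
  -- chains outside 𝒯 have card ≤ q
  have hrest : ∀ C ∈ 𝒞 \ 𝒯, C.card ≤ q := by
    intro C hC
    have := h𝒯top C (Finset.mem_sdiff.mp hC).1 (Finset.mem_sdiff.mp hC).2 T0 hT0𝒯
    omega
  have hsumrest : ∑ C ∈ 𝒞 \ 𝒯, C.card ≤ (𝒞.card - K1) * q := by
    calc ∑ C ∈ 𝒞 \ 𝒯, C.card ≤ ∑ _C ∈ 𝒞 \ 𝒯, q := Finset.sum_le_sum hrest
      _ = (𝒞 \ 𝒯).card * q := by rw [Finset.sum_const, smul_eq_mul]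
      _ = (𝒞.card - K1) * q := by rw [Finset.card_sdiff_of_subset h𝒯𝒞, h𝒯card]
  -- total count
  have hNEcard : NE.card ≤ ∑ C ∈ 𝒞, C.card := by
    have hsub : NE ⊆ 𝒞.biUnion id := by
      intro x hx
      obtain ⟨C, hC, hxC⟩ := h5 x hx
      exact Finset.mem_biUnion.mpr ⟨C, hC, hxC⟩
    calc NE.card ≤ (𝒞.biUnion id).card := Finset.card_le_card hsub
      _ ≤ ∑ C ∈ 𝒞, C.card := Finset.card_biUnion_le
  have hnsplit : n = E.card + NE.card := by
    have hsub : NE ⊆ V := Finset.filter_subset _ _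
    have h1' : E.card = V.card - NE.card := by rw [hE, Finset.card_sdiff_of_subset hsub]
    have h2' : NE.card ≤ V.card := Finset.card_le_card hsub
    omega
  have hsumsplit : ∑ C ∈ 𝒞, C.card = ∑ C ∈ 𝒞 \ 𝒯, C.card + ∑ C ∈ 𝒯, C.card :=
    (Finset.sum_sdiff h𝒯𝒞).symm
  have hK1r : K1 ≤ 𝒞.card := by omega
  have hra : 𝒞.card ≤ a := h6
  have hmain : n ≤ a * q + ρ := by
    have h0 : n ≤ (𝒞.card - K1) * q + (K1 * q + ρ) := by omega
    have h1' : (𝒞.card - K1) * q + K1 * q = 𝒞.card * q := by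
      rw [← Nat.add_mul, Nat.sub_add_cancel hK1r]
    have : 𝒞.card * q ≤ a * q := Nat.mul_le_mul_right q hra
    omega
  -- extract witness
  have hNEne : NE.Nonempty := by
    rw [← Finset.card_pos]
    have : (0:ℕ) < 𝒞.card := by omega
    obtain ⟨C, hC⟩ := Finset.card_pos.mp this
    obtain ⟨x, hx⟩ := h1 C hC
    exact Finset.card_pos.mpr ⟨x, h2 C hC hx⟩
  obtain ⟨v0, hv0NE, hv0⟩ := Finset.exists_mem_eq_sup NE hNEne f
  have hv0V : v0 ∈ V := (Finset.mem_filter.mp hv0NE).1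
  have hv0ne : (A v0).Nonempty := (Finset.mem_filter.mp hv0NE).2
  obtain ⟨c, d, hv0form⟩ := hform v0 hv0V hv0ne
  set p := sInf (A v0) with hp
  have hpA : p ∈ A v0 := inf_mem_of_form hX hv0form hv0ne
  have hpX : p ∈ X := by rw [hv0form] at hpA; exact hpA.1
  refine ⟨p, hpX, ?_⟩
  have hset : {v ∈ (V : Set ι) | p ∈ A v} = ↑(V.filter (fun u => p ∈ A u)) := by
    ext x
    simp [Finset.mem_filter]
  rw [hset, Set.ncard_coe_finset]
  have hcount : a = (V.filter (fun u => p ∈ A u)).card := hv0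
  rw [← hcount]
  rw [Int.ceil_le]
  have hq0 : (0:ℚ) < q := by positivity
  rw [div_le_iff₀ hq0]
  have : (n:ℚ) ≤ a * q + ρ := by exact_mod_cast hmain
  push_cast
  linarith
end

section
/- Given integers m ≥ k ≥ 2, define q ≥ 1 and ρ by division with remainder m-1 = (k-1)q + ρ with 0 ≤ ρ ≤ k-2. Let G be a finite simple graph on n ≥ m vertices with chromatic number χ, such that every subset of the vertex set of size m includes a clique of size k. Then n ≤ χq + ρ. -/
/-!
Fix a colouring with `χ` colours. A union of fewer than `k` colour classes has fewer than `m`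
vertices: otherwise it contains `m` vertices, hence a `k`-clique, whose `k` vertices would need
`k` distinct colours. Since `(k - 1)(q + 1) > (k - 1)q + ρ = m - 1`, at most `k - 2` colour classes
have more than `q` vertices. Putting them into a set of `k - 1` classes, these carry at most
`m - 1` vertices and each of the remaining `χ - (k - 1)` classes at most `q`, so
`n ≤ (k - 1)q + ρ + (χ - (k - 1))q = χq + ρ`.
-/

open Finset

theorem Finset.card_filter_lt_lt_of_sum_le {ι : Type*} [Fintype ι] (s : ι → ℕ) {r q ρ : ℕ}
    (hρ : ρ < r) (hs : ∀ T : Finset ι, #T ≤ r → ∑ i ∈ T, s i ≤ r * q + ρ) :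
    #{i | q < s i} < r := by
  by_contra! hbig
  obtain ⟨T, hTbig, hTcard⟩ := exists_subset_card_eq hbig
  have hlower : #T • (q + 1) ≤ ∑ i ∈ T, s i :=
    card_nsmul_le_sum _ _ _ fun i hi => (mem_filter.1 (hTbig hi)).2
  have hupper := hs T hTcard.le
  rw [hTcard, smul_eq_mul, mul_add_one] at hlower
  omega

theorem Fintype.sum_le_card_mul_add {ι : Type*} [Fintype ι] (s : ι → ℕ) {r q ρ : ℕ}
    (hρ : ρ < r) (hr : r ≤ Fintype.card ι)
    (hs : ∀ T : Finset ι, #T ≤ r → ∑ i ∈ T, s i ≤ r * q + ρ) :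
    ∑ i, s i ≤ Fintype.card ι * q + ρ := by
  classical
  obtain ⟨T, hbigT, -, hTcard⟩ := exists_subsuperset_card_eq (subset_univ {i | q < s i})
    (card_filter_lt_lt_of_sum_le s hρ hs).le (by simpa using hr)
  have hsmall : ∑ i ∈ univ \ T, s i ≤ #(univ \ T) • q := by
    refine sum_le_card_nsmul _ _ _ fun i hi => ?_
    by_contra! hbig
    exact (mem_sdiff.1 hi).2 (hbigT (by simpa using hbig))
  have hT := hs T hTcard.le
  rw [card_univ_sdiff, hTcard, smul_eq_mul] at hsmall
  calc ∑ i, s i = ∑ i ∈ univ \ T, s i + ∑ i ∈ T, s i := (sum_sdiff T.subset_univ).symm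
    _ ≤ (Fintype.card ι - r) * q + (r * q + ρ) := by omega
    _ = Fintype.card ι * q + ρ := by rw [← add_assoc, ← add_mul, Nat.sub_add_cancel hr]

namespace SimpleGraph

variable {V α : Type*} {G : SimpleGraph V} {k m : ℕ}

theorem IsNClique.le_card_of_mapsTo (C : G.Coloring α) {K : Finset V} {S : Finset α}
    (hK : G.IsNClique k K) (hKS : Set.MapsTo C K S) : k ≤ #S :=
  hK.card_eq ▸ card_le_card_of_injOn C hKS fun _ hu _ hv huv =>
    by_contra fun hne => C.valid (hK.isClique hu hv hne) huv

theorem Coloring.sum_card_colorClass_lt [Fintype V] [DecidableEq α] (C : G.Coloring α)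
    (hG : ∀ W : Finset V, #W = m → ∃ K ⊆ W, G.IsNClique k K) {S : Finset α} (hS : #S < k) :
    ∑ i ∈ S, #{v | C v = i} < m := by
  rw [sum_card_fiberwise_eq_card_filter]
  by_contra! hm
  obtain ⟨W, hWS, hWcard⟩ := exists_subset_card_eq hm
  obtain ⟨K, hKW, hK⟩ := hG W hWcard
  have := hK.le_card_of_mapsTo C fun v hv => (mem_filter.1 (hWS (hKW hv))).2
  omega

end SimpleGraph

theorem card_le_chromaticNumber_mul_add_general
    {V : Type*} [Fintype V] (G : SimpleGraph V)
    (k m q ρ : ℕ) (hk : 2 ≤ k)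
    (hρ : ρ ≤ k - 2) (hdiv : m - 1 = (k - 1) * q + ρ)
    (n : ℕ) (hn : Fintype.card V = n) (hnm : m ≤ n)
    (hagree : ∀ W : Finset V, W.card = m → ∃ K ⊆ W, G.IsNClique k K) :
    (n : ℕ∞) ≤ G.chromaticNumber * q + ρ := by
  classical
  have hχ : G.chromaticNumber = G.chromaticNumber.toNat := (ENat.natCast_toNat <|
    SimpleGraph.chromaticNumber_ne_top_iff_exists.2 ⟨_, G.colorable_of_fintype⟩).symm
  obtain ⟨C⟩ := G.colorable_chromaticNumber_of_fintype
  have htotal : ∑ i, #{v | C v = i} = n := by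
    rw [sum_card_fiberwise_eq_card_filter, filter_true_of_mem fun _ _ => mem_univ _, card_univ, hn]
  have hkχ : k ≤ G.chromaticNumber.toNat := by
    by_contra! hχk
    have := C.sum_card_colorClass_lt hagree (S := univ) (by simpa using hχk)
    omega
  have hn_le : n ≤ G.chromaticNumber.toNat * q + ρ := by
    have hunion (T : Finset _) (hT : #T ≤ k - 1) : ∑ i ∈ T, #{v | C v = i} ≤ (k - 1) * q + ρ := by
      have := C.sum_card_colorClass_lt hagree (S := T) (by omega)
      omega
    have := Fintype.sum_le_card_mul_add _ (by omega) (by rw [Fintype.card_fin]; omega) hunion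
    rwa [Fintype.card_fin, htotal] at this
  rw [hχ]
  exact_mod_cast hn_le

/-- Let `m ≥ k ≥ 2`, and write `m - 1 = (k-1)q + ρ` with `q ≥ 1`, `0 ≤ ρ ≤ k-2`.
If `G` is a graph on `n ≥ m` vertices such that every `m`-element vertex set
includes a clique of size `k`, then `n ≤ χ(G) * q + ρ`. -/
theorem card_le_chromaticNumber_mul_add
    {V : Type*} [Fintype V] (G : SimpleGraph V)
    (k m q ρ : ℕ) (hk : 2 ≤ k) (hkm : k ≤ m)
    (hq : 1 ≤ q) (hρ : ρ ≤ k - 2) (hdiv : m - 1 = (k - 1) * q + ρ)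
    (n : ℕ) (hn : Fintype.card V = n) (hnm : m ≤ n)
    (hagree : ∀ W : Finset V, W.card = m → ∃ K ⊆ W, G.IsNClique k K) :
    (n : ℕ∞) ≤ G.chromaticNumber * q + ρ :=
  card_le_chromaticNumber_mul_add_general G k m q ρ hk hρ hdiv n hn hnm hagree
end

section
/- Interval graphs satisfy χ = ω: let G be a finite simple graph and suppose there is an assignment to each vertex x of a set I_x ⊆ ℝ that is either empty or a closed bounded interval, such that distinct vertices x, y are adjacent in G if and only if I_x ∩ I_y ≠ ∅. Then the chromatic number of G equals its clique number. -/
open Set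

/-! Order the vertices by the left endpoints of their intervals. If `w` precedes `v` and meets it,
then the left endpoint of `I v` lies in `I w`; so the earlier neighbours of `v` all share a point,
and together with `v` they form a clique. Hence every vertex has fewer than `ω` earlier neighbours,
and greedy colouring in this order uses at most `ω` colours. -/

theorem Nat.sInf_compl_le_ncard {s : Set ℕ} (hs : s.Finite) : sInf sᶜ ≤ s.ncard := by
  by_contra! hlt
  have hsub : Iic s.ncard ⊆ s := fun c hc => by
    by_contra hcs
    exact (Nat.sInf_le hcs).not_gt (lt_of_le_of_lt hc hlt)
  have := ncard_le_ncard hsub hs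
  simp at this

theorem Set.left_mem_inter_Icc_of_nonempty {α : Type*} [Preorder α] {a b c d : α}
    (h : (Icc a b ∩ Icc c d).Nonempty) (hac : a ≤ c) : c ∈ Icc a b ∩ Icc c d := by
  obtain ⟨x, ⟨-, hxb⟩, hcx, hxd⟩ := h
  exact ⟨⟨hac, hcx.trans hxb⟩, le_rfl, hcx.trans hxd⟩

namespace SimpleGraph

theorem IsClique.ncard_le_cliqueNum {V : Type*} [Finite V] {G : SimpleGraph V} {s : Set V}
    (hs : G.IsClique s) : s.ncard ≤ G.cliqueNum := by
  lift s to Finset V using toFinite s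
  rw [ncard_coe_finset]
  exact hs.card_le_cliqueNum

section Preorder

variable {V : Type*} [Preorder V] (G : SimpleGraph V)

def lowerNeighborSet (v : V) : Set V := {w | w < v ∧ G.Adj w v}

theorem isClique_lowerNeighborSet_of_intervals {α : Type*} [ConditionallyCompleteLattice α]
    (I : V → Set α) (hI : ∀ x, I x = ∅ ∨ ∃ a b : α, a ≤ b ∧ I x = Icc a b)
    (hadj : ∀ x y, x ≠ y → (G.Adj x y ↔ (I x ∩ I y).Nonempty))
    (hmono : Monotone fun v => sInf (I v)) (v : V) : G.IsClique (G.lowerNeighborSet v) := by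
  have hmem : ∀ w ∈ G.lowerNeighborSet v, sInf (I v) ∈ I w := by
    rintro w ⟨hwv, hwadj⟩
    have hne := (hadj w v hwadj.ne).1 hwadj
    obtain ⟨c, d, hcd, hw⟩ := (hI w).resolve_left fun h => by simp [h] at hne
    obtain ⟨a, b, hab, hv⟩ := (hI v).resolve_left fun h => by simp [h] at hne
    have hca : c ≤ a := by simpa [hw, hv, csInf_Icc hcd, csInf_Icc hab] using hmono hwv.le
    rw [hw, hv] at hne
    rw [hv, csInf_Icc hab, hw]
    exact (left_mem_inter_Icc_of_nonempty hne hca).1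
  intro x hx y hy hxy
  exact (hadj x y hxy).2 ⟨_, hmem x hx, hmem y hy⟩

variable [Finite V]

noncomputable def greedyColoring : V → ℕ :=
  wellFounded_lt.fix fun v color => sInf {c | ∀ w (hw : w < v), G.Adj w v → color w hw ≠ c}

theorem greedyColoring_eq (v : V) :
    G.greedyColoring v = sInf (G.greedyColoring '' G.lowerNeighborSet v)ᶜ := by
  rw [greedyColoring, WellFounded.fix_eq]
  congr 1
  ext c
  simp [lowerNeighborSet]

theorem greedyColoring_ne {v w : V} (hwv : w < v) (hadj : G.Adj w v) :
    G.greedyColoring w ≠ G.greedyColoring v := by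
  have hmem := Nat.sInf_mem
    (toFinite (G.greedyColoring '' G.lowerNeighborSet v)).infinite_compl.nonempty
  rw [← greedyColoring_eq] at hmem
  exact fun h => hmem ⟨w, ⟨hwv, hadj⟩, h⟩

theorem greedyColoring_le_ncard (v : V) :
    G.greedyColoring v ≤ (G.lowerNeighborSet v).ncard := by
  rw [greedyColoring_eq]
  exact (Nat.sInf_compl_le_ncard (toFinite _)).trans (ncard_image_le (toFinite _))

end Preorder

section LinearOrder

variable {V : Type*} [LinearOrder V] [Finite V] (G : SimpleGraph V)

theorem colorable_of_forall_ncard_lowerNeighborSet_lt {k : ℕ}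
    (h : ∀ v, (G.lowerNeighborSet v).ncard < k) : G.Colorable k := by
  refine ⟨Coloring.mk
    (fun v => ⟨G.greedyColoring v, (G.greedyColoring_le_ncard v).trans_lt (h v)⟩)
    fun {v w} hvw heq => ?_⟩
  have heq' : G.greedyColoring v = G.greedyColoring w := congrArg Fin.val heq
  rcases hvw.ne.lt_or_gt with hlt | hlt
  · exact G.greedyColoring_ne hlt hvw heq'
  · exact G.greedyColoring_ne hlt hvw.symm heq'.symm

theorem colorable_cliqueNum_of_isClique_lowerNeighborSet
    (h : ∀ v, G.IsClique (G.lowerNeighborSet v)) : G.Colorable G.cliqueNum := by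
  refine G.colorable_of_forall_ncard_lowerNeighborSet_lt fun v => ?_
  have hclique : G.IsClique (insert v (G.lowerNeighborSet v)) :=
    isClique_insert.2 ⟨h v, fun w hw _ => hw.2.symm⟩
  have hv : v ∉ G.lowerNeighborSet v := fun hv => hv.1.false
  calc (G.lowerNeighborSet v).ncard < (insert v (G.lowerNeighborSet v)).ncard := by
        rw [ncard_insert_of_notMem hv]; omega
    _ ≤ G.cliqueNum := hclique.ncard_le_cliqueNum

end LinearOrder

end SimpleGraph

/-- **Interval graphs are perfect (χ = ω).**
If `G` is a finite simple graph and each vertex `x` is assigned a set `I x ⊆ ℝ`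
that is empty or a closed bounded interval, such that distinct vertices are
adjacent iff their assigned sets intersect, then the chromatic number of `G`
equals its clique number. -/
theorem interval_graph_chromatic_eq_clique
    {V : Type*} [Fintype V] (G : SimpleGraph V)
    (I : V → Set ℝ)
    (hI : ∀ x, I x = ∅ ∨ ∃ a b : ℝ, a ≤ b ∧ I x = Set.Icc a b)
    (hadj : ∀ x y, x ≠ y → (G.Adj x y ↔ (I x ∩ I y).Nonempty)) :
    G.chromaticNumber = (G.cliqueNum : ℕ∞) := by
  let key : V → ℝ ×ₗ Fin (Fintype.card V) := fun v => toLex (sInf (I v), Fintype.equivFin V v)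
  let _ : LinearOrder V := LinearOrder.lift' key fun v w h =>
    (Fintype.equivFin V).injective (congrArg (fun p => (ofLex p).2) h)
  have hmono : Monotone fun v => sInf (I v) := fun v w hvw => Prod.Lex.monotone_fst _ _ hvw
  have hcol := G.colorable_cliqueNum_of_isClique_lowerNeighborSet
    (G.isClique_lowerNeighborSet_of_intervals I hI hadj hmono)
  exact hcol.chromaticNumber_le.antisymm G.cliqueNum_le_chromaticNumber
end

section
/- Counting good sets: let d ≥ 1, k ≥ 2, m ≥ k be integers with m > d, and let A_1, ..., A_n (n ≥ m) be subsets of some set such that every m-element subset of {1,...,n} contains a k-element subset K with ⋂_{i∈K} A_i ≠ ∅. Call a (d+1)-element subset I ⊆ {1,...,n} good if ⋂_{i∈I} A_i ≠ ∅. Then the number of good sets is at least C(k,d+1)·C(n,d+1)/C(m,d+1), where C(a,b) denotes the binomial coefficient. -/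
/-! Double count the pairs `I ⊆ W` with `I` a good `(d+1)`-set and `W` an `m`-subset of `V`:
every `W` contains a `k`-set with a common point, hence at least `C(k, d+1)` good sets, while
each `(d+1)`-set lies in exactly `C(n-d-1, m-d-1)` of the `W`. The identity
`C(n, m) C(m, d+1) = C(n, d+1) C(n-d-1, m-d-1)` turns this into the bound. -/

open Finset

namespace Finset

variable {ι : Type*} [DecidableEq ι] {V : Finset ι} {G : Finset (Finset ι)} {r m c : ℕ}

theorem card_powersetCard_mul_le_card_mul_choose (hG : G ⊆ V.powersetCard r) (hrm : r ≤ m)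
    (hc : ∀ W ∈ V.powersetCard m, c ≤ #{I ∈ G | I ⊆ W}) :
    #(V.powersetCard m) * c ≤ #G * (#V - r).choose (m - r) := by
  refine card_mul_le_card_mul (fun W I : Finset ι => I ⊆ W) hc fun I hI => ?_
  obtain ⟨hIV, hIr⟩ := mem_powersetCard.1 (hG hI)
  rw [bipartiteBelow, card_filter_powersetCard_subset I V m hIV (hIr ▸ hrm), hIr]

theorem mul_choose_div_choose_le_card (hG : G ⊆ V.powersetCard r) (hrm : r ≤ m) (hmV : m ≤ #V)
    (hc : ∀ W ∈ V.powersetCard m, c ≤ #{I ∈ G | I ⊆ W}) :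
    (c * (#V).choose r : ℝ) / m.choose r ≤ #G := by
  have hcount := card_powersetCard_mul_le_card_mul_choose hG hrm hc
  rw [card_powersetCard] at hcount
  have hpos : 0 < (#V - r).choose (m - r) := Nat.choose_pos (by omega)
  have hnat : c * (#V).choose r ≤ #G * m.choose r := by
    refine Nat.le_of_mul_le_mul_right ?_ hpos
    calc c * (#V).choose r * (#V - r).choose (m - r)
        = (#V).choose m * c * m.choose r := by
          rw [mul_assoc, ← Nat.choose_mul hrm]; ring
      _ ≤ #G * (#V - r).choose (m - r) * m.choose r := Nat.mul_le_mul_right _ hcount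
      _ = #G * m.choose r * (#V - r).choose (m - r) := by ring
  rw [div_le_iff₀ (by exact_mod_cast Nat.choose_pos hrm)]
  exact_mod_cast hnat

end Finset

section GoodSets

variable {ι α : Type*} {A : ι → Set α} {V : Finset ι}

noncomputable def goodSets (A : ι → Set α) (V : Finset ι) (r : ℕ) : Finset (Finset ι) := by
  classical exact {I ∈ V.powersetCard r | (⋂ i ∈ I, A i).Nonempty}

theorem mem_goodSets {I : Finset ι} {r : ℕ} :
    I ∈ goodSets A V r ↔ I ⊆ V ∧ #I = r ∧ (⋂ i ∈ I, A i).Nonempty := by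
  simp only [goodSets, mem_filter, mem_powersetCard, and_assoc]

theorem powersetCard_subset_goodSets {K : Finset ι} (r : ℕ) (hKV : K ⊆ V)
    (hK : (⋂ i ∈ K, A i).Nonempty) : K.powersetCard r ⊆ goodSets A V r := by
  intro I hI
  obtain ⟨hIK, hIr⟩ := mem_powersetCard.1 hI
  exact mem_goodSets.2 ⟨hIK.trans hKV, hIr, hK.mono (Set.biInter_subset_biInter_left hIK)⟩

end GoodSets

theorem count_good_sets_general
    {ι : Type*} {α : Type*} (d k m : ℕ)
    (hmd : d < m)
    (V : Finset ι) (n : ℕ) (hn : V.card = n) (hnm : m ≤ n)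
    (A : ι → Set α)
    (hagree : ∀ W ⊆ V, W.card = m →
      ∃ K ⊆ W, K.card = k ∧ (⋂ i ∈ K, A i).Nonempty) :
    ((k.choose (d + 1) : ℝ) * (n.choose (d + 1))) / (m.choose (d + 1))
      ≤ {I : Finset ι | I ⊆ V ∧ I.card = d + 1 ∧ (⋂ i ∈ I, A i).Nonempty}.ncard := by
  classical
  have hgood : {I : Finset ι | I ⊆ V ∧ I.card = d + 1 ∧ (⋂ i ∈ I, A i).Nonempty}
      = goodSets A V (d + 1) :=
    Set.ext fun _ => mem_goodSets.symm
  rw [hgood, Set.ncard_coe_finset, ← hn]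
  refine mul_choose_div_choose_le_card (filter_subset _ _) (by omega) (hn ▸ hnm) ?_
  intro W hW
  obtain ⟨hWV, hWm⟩ := mem_powersetCard.1 hW
  obtain ⟨K, hKW, hKk, hK⟩ := hagree W hWV hWm
  calc k.choose (d + 1) = #(K.powersetCard (d + 1)) := by rw [card_powersetCard, hKk]
    _ ≤ #{I ∈ goodSets A V (d + 1) | I ⊆ W} := card_le_card fun I hI =>
        mem_filter.2 ⟨powersetCard_subset_goodSets _ (hKW.trans hWV) hK hI,
          (mem_powersetCard.1 hI).1.trans hKW⟩

/-- **Counting good sets.**  Let `d ≥ 1`, `k ≥ 2`, `m ≥ k`, `m > d`, and let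
`A v` (for `v` in a finite index set `V` of size `n ≥ m`) be arbitrary sets such
that every `m`-element subset of `V` contains a `k`-element subset whose sets
have a common element.  Call a `(d+1)`-element subset `I ⊆ V` good if
`⋂ i ∈ I, A i ≠ ∅`.  Then the number of good sets is at least
`C(k,d+1) * C(n,d+1) / C(m,d+1)`. -/
theorem count_good_sets
    {ι : Type*} {α : Type*} (d k m : ℕ) (hd : 1 ≤ d) (hk : 2 ≤ k) (hkm : k ≤ m)
    (hmd : d < m)
    (V : Finset ι) (n : ℕ) (hn : V.card = n) (hnm : m ≤ n)
    (A : ι → Set α)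
    (hagree : ∀ W ⊆ V, W.card = m →
      ∃ K ⊆ W, K.card = k ∧ (⋂ i ∈ K, A i).Nonempty) :
    ((k.choose (d + 1) : ℝ) * (n.choose (d + 1))) / (m.choose (d + 1))
      ≤ {I : Finset ι | I ⊆ V ∧ I.card = d + 1 ∧ (⋂ i ∈ I, A i).Nonempty}.ncard :=
  count_good_sets_general d k m hmd V n hn hnm A hagree
end

section
/- Let m, k ≥ 2 be integers with k ≤ m ≤ 2k-2, and let G be a finite simple graph on n ≥ m vertices such that every subset of the vertex set of size m includes a clique of size k. Then the clique number satisfies ω(G) ≥ n - m + k. -/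
open Finset

private theorem km_key {V : Type*} [Fintype V] [DecidableEq V] (G : SimpleGraph V)
    (k m : ℕ) (hkm : k ≤ m) (hm : m + 2 ≤ 2 * k)
    (hagree : ∀ W : Finset V, W.card = m → ∃ K ⊆ W, G.IsNClique k K) :
    ∀ N (s : Finset V), s.card = N → m ≤ N →
      ∃ K ⊆ s, G.IsClique (K : Set V) ∧ N + k ≤ K.card + m := by
  intro N
  induction N using Nat.strong_induction_on with
  | _ N IH =>
  intro s hsN hmN
  classical
  rcases eq_or_lt_of_le hmN with heq | hlt
  · obtain ⟨K, hKs, hK⟩ := hagree s (by omega)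
    have hcard := hK.card_eq
    exact ⟨K, hKs, hK.isClique, by omega⟩
  · -- maximum clique A inside s
    set T := s.powerset.filter (fun K : Finset V => G.IsClique (K : Set V)) with hT
    have hTne : T.Nonempty := ⟨∅, by simp [hT]⟩
    obtain ⟨A, hAT, hAmax'⟩ := T.exists_max_image (fun K => (K.card : ℕ)) hTne
    have hAs : A ⊆ s := mem_powerset.mp (mem_filter.mp hAT).1
    have hAclique : G.IsClique (A : Set V) := (mem_filter.mp hAT).2
    have hmax : ∀ K ⊆ s, G.IsClique (K : Set V) → K.card ≤ A.card := by
      intro K h1 h2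
      exact hAmax' K (mem_filter.mpr ⟨mem_powerset.mpr h1, h2⟩)
    -- lower bound on A.card via IH
    have hsne : s.Nonempty := card_pos.mp (by omega)
    obtain ⟨v₀, hv₀⟩ := hsne
    obtain ⟨K₁, hK₁e, hK₁c, hK₁card⟩ := IH (N - 1) (by omega) (s.erase v₀)
      (by rw [card_erase_of_mem hv₀, hsN]) (by omega)
    have hK₁A : K₁.card ≤ A.card := hmax K₁ (hK₁e.trans (erase_subset _ _)) hK₁c
    by_cases hdone : N + k ≤ A.card + m
    · exact ⟨A, hAs, hAclique, hdone⟩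
    exfalso
    have hαe : A.card + m + 1 = N + k := by omega
    set B := s \ A with hB
    have hBA : Disjoint B A := sdiff_disjoint
    have hBs : B ⊆ s := sdiff_subset
    have hBcard : B.card + A.card = N := by rw [hB, card_sdiff_add_card_eq_card hAs, hsN]
    have hBk : B.card + k = m + 1 := by omega
    set M : V → Finset V := fun b => A.filter (fun a => ¬ G.Adj b a) with hM
    have hMA : ∀ b, M b ⊆ A := fun b => filter_subset _ _
    have hMne : ∀ b ∈ B, (M b).Nonempty := by
      intro b hb
      rw [hM, filter_nonempty_iff]
      by_contra h
      push_neg at h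
      have hbA : b ∉ A := (mem_sdiff.mp hb).2
      have hclq : G.IsClique ((insert b A : Finset V) : Set V) := by
        rw [coe_insert]
        exact hAclique.insert (fun a haA hab => h a haA)
      have hle := hmax _ (insert_subset (mem_sdiff.mp hb).1 hAs) hclq
      rw [card_insert_of_notMem hbA] at hle
      omega
    -- a vertex in M b is a non-neighbor of b in A
    have hMadj : ∀ b a, a ∈ M b → (a ∈ A ∧ ¬ G.Adj b a) := by
      intro b a ha
      rw [hM, mem_filter] at ha
      exact ha
    by_cases hHall : ∀ E ⊆ B, E.card ≤ (E.biUnion M).card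
    · -- Hall's condition holds on all of B : get SDR, find unmatched v ∈ A
      obtain ⟨f, hfinj, hfmem⟩ :=
        (Finset.all_card_le_biUnion_card_iff_existsInjective'
          (fun b : {x // x ∈ B} => M ↑b)).mp (by
            intro E
            have hsub : E.image (Subtype.val) ⊆ B := by
              intro x hx
              obtain ⟨b, _, rfl⟩ := mem_image.mp hx
              exact b.2
            have h1 : (E.image Subtype.val).card = E.card :=
              card_image_of_injective E Subtype.val_injective
            have h2 : (E.image Subtype.val).biUnion M = E.biUnion (fun b => M ↑b) :=
              image_biUnion
            have := hHall _ hsub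
            rw [h1, h2] at this
            exact this)
      set fB := B.attach.image (fun b => f b) with hfB
      have hfBcard : fB.card = B.card := by
        rw [hfB, card_image_of_injective _ hfinj, card_attach]
      have hfBA : fB ⊆ A := by
        intro x hx
        obtain ⟨b, _, rfl⟩ := mem_image.mp hx
        exact hMA _ (hfmem b)
      have hAgtB : B.card + 1 ≤ A.card := by omega
      have hAfB : (A \ fB).Nonempty := by
        have := card_le_card_sdiff_add_card (s := A) (t := fB)
        rw [← card_pos]
        omega
      obtain ⟨v, hv⟩ := hAfB
      have hvA : v ∈ A := (mem_sdiff.mp hv).1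
      have hvfB : v ∉ fB := (mem_sdiff.mp hv).2
      obtain ⟨K', hK'sub, hK'cl, hK'card⟩ := IH (N - 1) (by omega) (s.erase v)
        (by rw [card_erase_of_mem (hAs hvA), hsN]) (by omega)
      -- now show K'.card ≤ A.card - 1, contradiction
      set Bin := B.attach.filter (fun b : {x // x ∈ B} => (↑b : V) ∈ K') with hBin
      set Q := Bin.image (fun b => f b) with hQ
      have hQcard : Q.card = (K' ∩ B).card := by
        rw [hQ, card_image_of_injective _ hfinj]
        have : Bin.image Subtype.val = K' ∩ B := by
          ext x
          simp only [hBin, mem_image, mem_filter, mem_attach, true_and, mem_inter]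
          constructor
          · rintro ⟨b, hb, rfl⟩; exact ⟨hb, b.2⟩
          · rintro ⟨h1, h2⟩; exact ⟨⟨x, h2⟩, h1, rfl⟩
        rw [← this, card_image_of_injective _ Subtype.val_injective]
      have hQA : Q ⊆ A := by
        intro x hx
        obtain ⟨b, _, rfl⟩ := mem_image.mp hx
        exact hMA _ (hfmem b)
      have hvK' : v ∉ K' := fun h => (notMem_erase v s) (hK'sub h)
      have hvQ : v ∉ Q := by
        intro h
        apply hvfB
        rw [hfB]
        obtain ⟨b, _, rfl⟩ := mem_image.mp h
        exact mem_image.mpr ⟨b, mem_attach _ _, rfl⟩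
      have hQK' : Disjoint Q K' := by
        rw [disjoint_left]
        rintro x hx hxK'
        obtain ⟨b, hb, rfl⟩ := mem_image.mp hx
        rw [hBin, mem_filter] at hb
        have hbK' : (↑b : V) ∈ K' := hb.2
        have hne : (↑b : V) ≠ f b := by
          intro h
          have h1 : (↑b : V) ∈ A := h ▸ hMA _ (hfmem b)
          exact (disjoint_left.mp hBA) b.2 h1
        exact (hMadj _ _ (hfmem b)).2 (hK'cl hbK' hxK' hne)
      -- K' ∩ A and Q are disjoint subsets of A.erase v
      have hsubA : (K' ∩ A) ∪ Q ⊆ A.erase v := by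
        intro x hx
        rcases mem_union.mp hx with h | h
        · exact mem_erase.mpr ⟨fun he => hvK' (he ▸ (mem_inter.mp h).1), (mem_inter.mp h).2⟩
        · exact mem_erase.mpr ⟨fun he => hvQ (he ▸ h), hQA h⟩
      have hdisj : Disjoint (K' ∩ A) Q := by
        exact Disjoint.symm (hQK'.mono_right inter_subset_left)
      have hcount : (K' ∩ A).card + Q.card ≤ A.card - 1 := by
        have h1 := card_le_card hsubA
        rw [card_union_of_disjoint hdisj] at h1
        rw [card_erase_of_mem hvA] at h1
        exact h1
      have hKsplit : K'.card ≤ (K' ∩ A).card + (K' ∩ B).card := by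
        have : K' = (K' ∩ A) ∪ (K' ∩ B) := by
          rw [← inter_union_distrib_left]
          have hKs' : K' ⊆ A ∪ B := by
            intro x hx
            have hxs : x ∈ s := (erase_subset _ _) (hK'sub hx)
            by_cases hxA : x ∈ A
            · exact mem_union_left _ hxA
            · exact mem_union_right _ (mem_sdiff.mpr ⟨hxs, hxA⟩)
          rw [inter_eq_left.mpr hKs']
        calc K'.card = ((K' ∩ A) ∪ (K' ∩ B)).card := by rw [← this]
          _ ≤ (K' ∩ A).card + (K' ∩ B).card := card_union_le _ _
      have hApos : 1 ≤ A.card := by omega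
      omega
    · -- Hall fails: take D of maximum deficiency
      push_neg at hHall
      obtain ⟨E₀, hE₀B, hE₀⟩ := hHall
      obtain ⟨D, hDP, hDmax⟩ := Finset.exists_max_image B.powerset
        (fun E => (E.card : ℤ) - ((E.biUnion M).card : ℤ)) ⟨E₀, mem_powerset.mpr hE₀B⟩
      have hDB : D ⊆ B := mem_powerset.mp hDP
      set U := D.biUnion M with hU
      have hdefZ := hDmax E₀ (mem_powerset.mpr hE₀B)
      have hdef : U.card + 1 ≤ D.card := by
        have : (E₀.card : ℤ) - ((E₀.biUnion M).card : ℤ) ≥ 1 := by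
          have : (E₀.biUnion M).card < E₀.card := hE₀
          omega
        omega
      have hUA : U ⊆ A := by
        rw [hU]
        exact biUnion_subset.mpr (fun b _ => hMA b)
      set P := B \ D with hP
      have hPD : P.card + D.card = B.card := by rw [hP, card_sdiff_add_card_eq_card hDB]
      -- Hall on P with targets M b \ U
      obtain ⟨g, hginj, hgmem⟩ :=
        (Finset.all_card_le_biUnion_card_iff_existsInjective'
          (fun b : {x // x ∈ P} => M ↑b \ U)).mp (by
            intro E
            set E' := E.image Subtype.val with hE'
            have hE'c : E'.card = E.card := card_image_of_injective E Subtype.val_injective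
            have hE'P : E' ⊆ P := by
              intro x hx
              obtain ⟨b, _, rfl⟩ := mem_image.mp hx
              exact b.2
            have hdisj : Disjoint D E' := Disjoint.mono_right hE'P disjoint_sdiff
            have hDE'B : D ∪ E' ⊆ B := union_subset hDB (hE'P.trans sdiff_subset)
            have hmax2 := hDmax (D ∪ E') (mem_powerset.mpr hDE'B)
            have h1 : (D ∪ E').card = D.card + E'.card := card_union_of_disjoint hdisj
            have h2 : (D ∪ E').biUnion M = U ∪ E'.biUnion M := by
              rw [hU]
              ext x
              simp only [mem_biUnion, mem_union]
              constructor
              · rintro ⟨b, hb | hb, h⟩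
                exacts [Or.inl ⟨b, hb, h⟩, Or.inr ⟨b, hb, h⟩]
              · rintro (⟨b, hb, h⟩ | ⟨b, hb, h⟩)
                exacts [⟨b, Or.inl hb, h⟩, ⟨b, Or.inr hb, h⟩]
            have h3 : E.biUnion (fun b => M ↑b \ U) = (E'.biUnion M) \ U := by
              ext x
              simp only [mem_biUnion, mem_sdiff, hE', mem_image]
              constructor
              · rintro ⟨b, hb, hx1, hx2⟩
                exact ⟨⟨↑b, ⟨b, hb, rfl⟩, hx1⟩, hx2⟩
              · rintro ⟨⟨y, ⟨b, hb, rfl⟩, hx1⟩, hx2⟩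
                exact ⟨b, hb, hx1, hx2⟩
            have h4 : (U ∪ E'.biUnion M).card = U.card + ((E'.biUnion M) \ U).card := by
              rw [← union_sdiff_self_eq_union, card_union_of_disjoint disjoint_sdiff]
            rw [h3]
            rw [h1, h2, h4] at hmax2
            omega)
      set gP := P.attach.image (fun b => g b) with hgP
      have hgPcard : gP.card = P.card := by
        rw [hgP, card_image_of_injective _ hginj, card_attach]
      have hgPAU : gP ⊆ A \ U := by
        intro x hx
        obtain ⟨b, _, rfl⟩ := mem_image.mp hx
        have := hgmem b
        exact mem_sdiff.mpr ⟨hMA _ (mem_sdiff.mp this).1, (mem_sdiff.mp this).2⟩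
      set W₀ := B ∪ (U ∪ gP) with hW₀
      have hW₀s : W₀ ⊆ s :=
        union_subset hBs (union_subset (hUA.trans hAs) ((hgPAU.trans sdiff_subset).trans hAs))
      have hUgP : Disjoint U gP := by
        exact Disjoint.mono_right hgPAU disjoint_sdiff
      have hBUgP : Disjoint B (U ∪ gP) := by
        refine hBA.mono_right (union_subset hUA (hgPAU.trans sdiff_subset))
      have hW₀card : W₀.card = B.card + (U.card + gP.card) := by
        rw [hW₀, card_union_of_disjoint hBUgP, card_union_of_disjoint hUgP]
      have hW₀m : W₀.card + 1 ≤ m := by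
        have hDle : D.card ≤ B.card := card_le_card hDB
        omega
      obtain ⟨W, hW₀W, hWs, hWcard⟩ := exists_subsuperset_card_eq (n := m) hW₀s (by omega) (by omega)
      obtain ⟨K₀, hK₀W, hK₀⟩ := hagree W hWcard
      have hK₀card := hK₀.card_eq
      have hK₀cl := hK₀.isClique
      -- |K₀ ∩ (P ∪ gP)| ≤ P.card
      have hpair : (K₀ ∩ (P ∪ gP)).card ≤ P.card := by
        have hsub : K₀ ∩ (P ∪ gP) ⊆ P.attach.biUnion (fun b => K₀ ∩ {(↑b : V), g b}) := by
          intro x hx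
          obtain ⟨hx1, hx2⟩ := mem_inter.mp hx
          rcases mem_union.mp hx2 with h | h
          · exact mem_biUnion.mpr ⟨⟨x, h⟩, mem_attach _ _,
              mem_inter.mpr ⟨hx1, mem_insert_self _ _⟩⟩
          · obtain ⟨b, _, rfl⟩ := mem_image.mp h
            exact mem_biUnion.mpr ⟨b, mem_attach _ _,
              mem_inter.mpr ⟨hx1, mem_insert.mpr (Or.inr (mem_singleton_self _))⟩⟩
        calc (K₀ ∩ (P ∪ gP)).card
            ≤ (P.attach.biUnion (fun b => K₀ ∩ {(↑b : V), g b})).card := card_le_card hsub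
          _ ≤ P.attach.card * 1 := by
              apply card_biUnion_le_card_mul
              intro b _
              rw [card_le_one]
              intro x hx y hy
              have hne : (↑b : V) ≠ g b := by
                intro h
                have h1 : (↑b : V) ∈ A := by
                  have := mem_sdiff.mp (hgmem b)
                  exact h ▸ hMA _ this.1
                exact (disjoint_left.mp hBA) (sdiff_subset b.2) h1
              have hnadj : ¬ G.Adj (↑b : V) (g b) :=
                (hMadj _ _ (mem_sdiff.mp (hgmem b)).1).2
              obtain ⟨hxK, hxp⟩ := mem_inter.mp hx
              obtain ⟨hyK, hyp⟩ := mem_inter.mp hy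
              rcases mem_insert.mp hxp with rfl | hxp <;>
                rcases mem_insert.mp hyp with rfl | hyp
              · rfl
              · rw [mem_singleton] at hyp
                subst hyp
                exact absurd (hK₀cl hxK hyK hne) hnadj
              · rw [mem_singleton] at hxp
                subst hxp
                exact absurd (hK₀cl hyK hxK hne) hnadj
              · rw [mem_singleton] at hxp hyp; rw [hxp, hyp]
          _ = P.card := by rw [card_attach, mul_one]
      -- |K₀ ∩ (D ∪ U)| ≥ U.card + 1
      have hsplit : K₀.card ≤ (K₀ ∩ (D ∪ U)).card + (K₀ ∩ (P ∪ gP)).card + (W.card - W₀.card) := by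
        have hKsub : K₀ ⊆ (D ∪ U) ∪ ((P ∪ gP) ∪ (W \ W₀)) := by
          intro x hx
          have hxW : x ∈ W := hK₀W hx
          by_cases hxW₀ : x ∈ W₀
          · rcases mem_union.mp hxW₀ with h | h
            · rcases mem_union.mp (by
                have : x ∈ D ∪ P := by
                  rw [hP, union_sdiff_of_subset hDB]
                  exact h
                exact this) with h' | h'
              · exact mem_union_left _ (mem_union_left _ h')
              · exact mem_union_right _ (mem_union_left _ (mem_union_left _ h'))
            · rcases mem_union.mp h with h' | h'
              · exact mem_union_left _ (mem_union_right _ h')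
              · exact mem_union_right _ (mem_union_left _ (mem_union_right _ h'))
          · exact mem_union_right _ (mem_union_right _ (mem_sdiff.mpr ⟨hxW, hxW₀⟩))
        have h1 : K₀.card ≤ (K₀ ∩ (D ∪ U)).card + (K₀ ∩ ((P ∪ gP) ∪ (W \ W₀))).card := by
          have : K₀ = (K₀ ∩ (D ∪ U)) ∪ (K₀ ∩ ((P ∪ gP) ∪ (W \ W₀))) := by
            rw [← inter_union_distrib_left, inter_eq_left.mpr hKsub]
          calc K₀.card = _ := by rw [← this]
            _ ≤ _ := card_union_le _ _
        have h2 : (K₀ ∩ ((P ∪ gP) ∪ (W \ W₀))).card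
            ≤ (K₀ ∩ (P ∪ gP)).card + (W \ W₀).card := by
          rw [inter_union_distrib_left]
          calc ((K₀ ∩ (P ∪ gP)) ∪ (K₀ ∩ (W \ W₀))).card
              ≤ (K₀ ∩ (P ∪ gP)).card + (K₀ ∩ (W \ W₀)).card := card_union_le _ _
            _ ≤ (K₀ ∩ (P ∪ gP)).card + (W \ W₀).card := by
                gcongr
                exact inter_subset_right
        have h3 : (W \ W₀).card = W.card - W₀.card := card_sdiff_of_subset hW₀W
        omega
      have hIcard : U.card + 1 ≤ (K₀ ∩ (D ∪ U)).card := by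
        have hW₀W' : W₀.card ≤ W.card := card_le_card hW₀W
        omega
      -- the enlarged clique
      set I := K₀ ∩ (D ∪ U) with hI
      set Kstar := I ∪ (A \ U) with hKstar
      have hIK₀ : I ⊆ K₀ := inter_subset_left
      have hIDU : I ⊆ D ∪ U := inter_subset_right
      have hKstarclique : G.IsClique (Kstar : Set V) := by
        intro x hx y hy hxy
        rw [hKstar, coe_union, Set.mem_union] at hx hy
        have adjDA : ∀ a b : V, a ∈ D → b ∈ A → b ∉ U → a ≠ b → G.Adj a b := by
          intro a b haD hbA hbU hab
          by_contra hnadj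
          apply hbU
          rw [hU]
          exact mem_biUnion.mpr ⟨a, haD, by rw [hM, mem_filter]; exact ⟨hbA, hnadj⟩⟩
        have hcase : ∀ {x y : V}, x ∈ (I : Set V) → y ∈ ((A \ U : Finset V) : Set V)
            → x ≠ y → G.Adj x y := by
          intro x y hx hy hxy
          rw [mem_coe] at hx hy
          have hyA : y ∈ A := (mem_sdiff.mp hy).1
          have hyU : y ∉ U := (mem_sdiff.mp hy).2
          rcases mem_union.mp (hIDU hx) with h | h
          · exact adjDA _ _ h hyA hyU hxy
          · exact hAclique (mem_coe.mpr (hUA h)) (mem_coe.mpr hyA) hxy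
        rcases hx with hx | hx <;> rcases hy with hy | hy
        · exact hK₀cl (hIK₀ (mem_coe.mp hx)) (hIK₀ (mem_coe.mp hy)) hxy
        · exact hcase hx hy hxy
        · exact (hcase hy hx (Ne.symm hxy)).symm
        · exact hAclique ((coe_subset.mpr sdiff_subset) hx) ((coe_subset.mpr sdiff_subset) hy) hxy
      have hKstars : Kstar ⊆ s := by
        rw [hKstar]
        exact union_subset ((hIK₀.trans hK₀W).trans hWs) (sdiff_subset.trans hAs)
      have hIdisj : Disjoint I (A \ U) := by
        refine Disjoint.mono_left hIDU ?_
        rw [disjoint_left]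
        intro x hx hx2
        rcases mem_union.mp hx with h | h
        · exact (disjoint_left.mp hBA) (hDB h) (mem_sdiff.mp hx2).1
        · exact (mem_sdiff.mp hx2).2 h
      have hKstarcard : Kstar.card = I.card + (A \ U).card := by
        rw [hKstar, card_union_of_disjoint hIdisj]
      have hAU : (A \ U).card + U.card = A.card := card_sdiff_add_card_eq_card hUA
      have hfinal := hmax Kstar hKstars hKstarclique
      omega

/-- Let `m, k ≥ 2` with `k ≤ m ≤ 2k - 2`.  If `G` is a finite simple graph on
`n ≥ m` vertices such that every `m`-element vertex set includes a clique of
size `k`, then `ω(G) ≥ n - m + k`. -/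
theorem cliqueNum_ge_of_km_agreeable
    {V : Type*} [Fintype V] (G : SimpleGraph V)
    (k m : ℕ) (hk : 2 ≤ k) (hkm : k ≤ m) (hm : m ≤ 2 * k - 2)
    (n : ℕ) (hn : Fintype.card V = n) (hnm : m ≤ n)
    (hagree : ∀ W : Finset V, W.card = m → ∃ K ⊆ W, G.IsNClique k K) :
    n - m + k ≤ G.cliqueNum := by
  classical
  obtain ⟨K, hKu, hKcl, hKcard⟩ := km_key G k m hkm (by omega) hagree n Finset.univ
    (by rw [Finset.card_univ, hn]) hnm
  have h1 : K.card ≤ G.cliqueNum := SimpleGraph.IsClique.card_le_cliqueNum (tc := hKcl)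
  omega
end

section
/- Let G be a finite simple graph that has a vertex cover of size z but no vertex cover of size z-1, and such that for every vertex v, the graph G∖{v} obtained by deleting v has a vertex cover of size at most z-1. Then |V(G)| ≤ 2z. -/
/-- `Z` is a vertex cover of the simple graph `G`: every edge has an end in `Z`. -/
def SimpleGraph.IsVertexCoverFinset {V : Type*} (G : SimpleGraph V) (Z : Finset V) : Prop :=
  ∀ ⦃u v : V⦄, G.Adj u v → u ∈ Z ∨ v ∈ Z

/-- If a finite graph `G` has a vertex cover of size `z` but none of size `z - 1`,
and deleting any single vertex yields a graph with a vertex cover of size at most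
`z - 1`, then `G` has at most `2z` vertices. -/
theorem card_le_two_mul_of_vertex_cover
    {V : Type*} [Fintype V] [DecidableEq V] (G : SimpleGraph V) (z : ℕ)
    (hz : ∃ Z : Finset V, Z.card = z ∧ G.IsVertexCoverFinset Z)
    (hz' : ¬ ∃ Z : Finset V, Z.card = z - 1 ∧ G.IsVertexCoverFinset Z)
    (hdel : ∀ v : V, ∃ Z : Finset V, Z.card ≤ z - 1 ∧ v ∉ Z ∧
      ∀ ⦃a b : V⦄, G.Adj a b → a ≠ v → b ≠ v → a ∈ Z ∨ b ∈ Z) :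
    Fintype.card V ≤ 2 * z := by
  classical
  set n := Fintype.card V with hn
  by_cases hnz : n < z
  · omega
  push_neg at hnz
  obtain ⟨Z0, hZ0card, hZ0cov⟩ := hz
  have hz1 : 1 ≤ z := by
    by_contra h
    exact hz' ⟨Z0, by omega, hZ0cov⟩
  -- every vertex cover has at least z elements
  have coverA : ∀ C : Finset V, G.IsVertexCoverFinset C → z ≤ C.card := by
    intro C hC
    by_contra h
    push_neg at h
    obtain ⟨D, hCD, hDcard⟩ :=
      Finset.exists_superset_card_eq (n := z - 1) (s := C) (by omega) (by omega)
    refine hz' ⟨D, hDcard, ?_⟩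
    intro u v huv
    rcases hC huv with h' | h'
    · exact Or.inl (hCD h')
    · exact Or.inr (hCD h')
  -- every independent set has at most n - z elements
  have indepB : ∀ J : Finset V, (∀ a ∈ J, ∀ b ∈ J, ¬ G.Adj a b) → J.card ≤ n - z := by
    intro J hJ
    have hcov : G.IsVertexCoverFinset Jᶜ := by
      intro u v huv
      by_contra h
      push_neg at h
      simp only [Finset.mem_compl, not_not] at h
      exact hJ u h.1 v h.2 huv
    have h1 := coverA _ hcov
    have h2 : (Jᶜ : Finset V).card = n - J.card := by
      simp [Finset.card_compl, hn]
    have h3 : J.card ≤ n := Finset.card_le_univ J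
    omega
  -- for every vertex v, a maximum independent set avoiding v
  have hIv : ∀ v : V, ∃ Iv : Finset V,
      (∀ a ∈ Iv, ∀ b ∈ Iv, ¬ G.Adj a b) ∧ Iv.card = n - z ∧ v ∉ Iv := by
    intro v
    obtain ⟨Zv, hZvcard, hvZv, hZvcov⟩ := hdel v
    have hCv : G.IsVertexCoverFinset (insert v Zv) := by
      intro a b hab
      by_cases ha : a = v
      · exact Or.inl (by simp [ha])
      by_cases hb : b = v
      · exact Or.inr (by simp [hb])
      rcases hZvcov hab ha hb with h' | h'
      · exact Or.inl (Finset.mem_insert_of_mem h')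
      · exact Or.inr (Finset.mem_insert_of_mem h')
    have hcard : (insert v Zv).card = z := by
      have h1 := coverA _ hCv
      have h2 : (insert v Zv).card = Zv.card + 1 := Finset.card_insert_of_notMem hvZv
      omega
    refine ⟨(insert v Zv)ᶜ, ?_, ?_, ?_⟩
    · intro a ha b hb hab
      simp only [Finset.mem_compl] at ha hb
      rcases hCv hab with h' | h'
      · exact ha h'
      · exact hb h'
    · rw [Finset.card_compl, hcard]
    · simp
  choose I hIindep hIcard hInot using hIv
  -- Hajnal-type induction: 2α ≤ |⋂| + |⋃| over any nonempty family
  have key : ∀ {S : Finset V} (hS : S.Nonempty),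
      2 * (n - z) ≤ (S.inf I).card + (S.sup I).card := by
    intro S hS
    induction hS using Finset.Nonempty.cons_induction with
    | singleton a => simp [hIcard a, two_mul]
    | cons a s h hs ih =>
      rw [Finset.inf_cons, Finset.sup_cons, Finset.inf_eq_inter, Finset.sup_eq_union]
      set X := s.inf I with hX
      set U := s.sup I with hU
      set B := I a with hB
      -- X is contained in every I w, w ∈ s, hence independent
      have hXsub : ∀ w ∈ s, X ⊆ I w := fun w hw => Finset.inf_le hw
      obtain ⟨w0, hw0⟩ := hs
      have hXindep : ∀ x ∈ X, ∀ y ∈ X, ¬ G.Adj x y := by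
        intro x hx y hy
        exact hIindep w0 x (hXsub w0 hw0 hx) y (hXsub w0 hw0 hy)
      set Y := X \ B with hY
      set Tbad := B.filter (fun b => ∃ y ∈ Y, G.Adj b y) with hTbad
      -- Y.card ≤ Tbad.card
      have claim1 : Y.card ≤ Tbad.card := by
        have hindep : ∀ x ∈ (B \ Tbad) ∪ Y, ∀ y ∈ (B \ Tbad) ∪ Y, ¬ G.Adj x y := by
          intro x hx y hy hxy
          rcases Finset.mem_union.mp hx with hx' | hx' <;>
            rcases Finset.mem_union.mp hy with hy' | hy'
          · exact hIindep a x (Finset.mem_sdiff.mp hx').1 y (Finset.mem_sdiff.mp hy').1 hxy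
          · have := (Finset.mem_sdiff.mp hx').2
            rw [hTbad, Finset.mem_filter] at this
            push_neg at this
            exact this (Finset.mem_sdiff.mp hx').1 y hy' hxy
          · have := (Finset.mem_sdiff.mp hy').2
            rw [hTbad, Finset.mem_filter] at this
            push_neg at this
            exact this (Finset.mem_sdiff.mp hy').1 x hx' hxy.symm
          · exact hXindep x (Finset.mem_sdiff.mp hx').1 y (Finset.mem_sdiff.mp hy').1 hxy
        have hb := indepB _ hindep
        have hdisj : Disjoint (B \ Tbad) Y := by
          refine Finset.disjoint_left.mpr ?_
          intro t ht hty
          exact (Finset.mem_sdiff.mp hty).2 (Finset.mem_sdiff.mp ht).1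
        have hcardu : ((B \ Tbad) ∪ Y).card = (B \ Tbad).card + Y.card :=
          Finset.card_union_of_disjoint hdisj
        have hTsub : Tbad ⊆ B := Finset.filter_subset _ _
        have hsd : (B \ Tbad).card = B.card - Tbad.card := Finset.card_sdiff_of_subset hTsub
        have hTle : Tbad.card ≤ B.card := Finset.card_le_card hTsub
        have hBcard : B.card = n - z := hIcard a
        omega
      -- Tbad ⊆ B \ U
      have claim2 : Tbad ⊆ B \ U := by
        intro b hb
        rw [hTbad, Finset.mem_filter] at hb
        obtain ⟨hbB, y, hyY, hady⟩ := hb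
        refine Finset.mem_sdiff.mpr ⟨hbB, ?_⟩
        intro hbU
        obtain ⟨w, hws, hbw⟩ := Finset.mem_sup.mp hbU
        exact hIindep w b hbw y (hXsub w hws (Finset.mem_sdiff.mp hyY).1) hady
      have claim2' : Tbad.card ≤ (B \ U).card := Finset.card_le_card claim2
      have h1 : (X ∩ B).card + Y.card = X.card := Finset.card_inter_add_card_sdiff X B
      have h2 : (B \ U).card + U.card = (B ∪ U).card := Finset.card_sdiff_add_card B U
      have hcomm : (B ∩ X).card = (X ∩ B).card := by rw [Finset.inter_comm]
      have hcomm2 : (B ∪ U).card = (U ∪ B).card := by rw [Finset.union_comm]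
      omega
  -- conclude
  rcases isEmpty_or_nonempty V with hV | hV
  · have h0 : n = 0 := by rw [hn]; exact Fintype.card_eq_zero
    omega
  have huniv : (Finset.univ : Finset V).Nonempty := Finset.univ_nonempty
  have hk := key huniv
  have hXempty : (Finset.univ.inf I : Finset V) = ∅ := by
    rw [Finset.eq_empty_iff_forall_notMem]
    intro v hv
    have hsub : Finset.univ.inf I ⊆ I v := Finset.inf_le (Finset.mem_univ v)
    exact hInot v (hsub hv)
  have hUle : (Finset.univ.sup I : Finset V).card ≤ n := Finset.card_le_univ _
  rw [hXempty] at hk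
  simp only [Finset.card_empty, zero_add] at hk
  omega
end

section
/- Let d ≥ 1 and m, k ≥ 2 be integers with k ≤ m ≤ 2k-2, and let S be a (k,m)-agreeable d-box society with n voters: each voter v has an approval set A_v ⊆ ℝ^d that is a box (a Cartesian product of d closed bounded intervals, possibly empty), n ≥ m, and every m-element subset of voters includes k voters whose approval sets have a common point. Then there exists a point of ℝ^d contained in at least n - m + k of the approval sets. -/
open Classical in
/-- `Good R K`: the elements of `K` are pairwise related by `R`. -/
def GoodRel {ι : Type*} (R : ι → ι → Prop) (K : Finset ι) : Prop :=
  ∀ u ∈ K, ∀ v ∈ K, u ≠ v → R u v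

theorem goodRel_subset {ι : Type*} {R : ι → ι → Prop} {K K' : Finset ι}
    (h : K' ⊆ K) (hK : GoodRel R K) : GoodRel R K' :=
  fun u hu v hv huv => hK u (h hu) v (h hv) huv

open Classical in
theorem exchangeLemma {ι : Type*} (R : ι → ι → Prop)
    (hsym : ∀ u v, R u v → R v u)
    (V : Finset ι) (α : ℕ)
    (hmax : ∀ J ⊆ V, GoodRel R J → J.card ≤ α)
    (I1 : Finset ι) (hI1V : I1 ⊆ V) (hI1g : GoodRel R I1)
    (Hcrit : ∀ v ∈ V, ∃ I ⊆ V, GoodRel R I ∧ I.card = α ∧ v ∉ I) :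
    ∀ X : Finset ι, X ⊆ I1 →
      ∃ Z : Finset ι, Z ⊆ V ∧ (∀ z ∈ Z, z ∉ I1) ∧ X.card ≤ Z.card ∧
        (∀ z ∈ Z, ∃ x ∈ X, ¬ R z x) := by
  intro X
  induction X using Finset.strongInductionOn with
  | _ X IH =>
  intro hXI1
  rcases X.eq_empty_or_nonempty with hX | ⟨v, hvX⟩
  · exact ⟨∅, by simp [hX]⟩
  · obtain ⟨I', hI'V, hI'g, hI'c, hvI'⟩ := Hcrit v (hI1V (hXI1 hvX))
    set Y : Finset ι := X \ I' with hYdef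
    set X' : Finset ι := X ∩ I' with hX'def
    have hYI' : ∀ y ∈ Y, y ∉ I' := fun y hy => (Finset.mem_sdiff.mp hy).2
    have hYX : Y ⊆ X := Finset.sdiff_subset
    have hX'X : X' ⊆ X := Finset.inter_subset_left
    have hX'ss : X' ⊂ X := by
      refine ⟨hX'X, fun hs => ?_⟩
      have : v ∈ X' := hs hvX
      exact hvI' (Finset.mem_inter.mp this).2
    -- the exchange step
    set ZY : Finset ι := I'.filter (fun w => ∃ y ∈ Y, ¬ R w y) with hZYdef
    have hZYI' : ZY ⊆ I' := Finset.filter_subset _ _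
    have hYcard : Y.card ≤ ZY.card := by
      by_contra hlt
      push_neg at hlt
      set J : Finset ι := (I' \ ZY) ∪ Y with hJdef
      have hJV : J ⊆ V := by
        intro x hx
        rcases Finset.mem_union.mp hx with h | h
        · exact hI'V (Finset.mem_sdiff.mp h).1
        · exact hI1V (hXI1 (hYX h))
      have hJg : GoodRel R J := by
        intro x hx y hy hxy
        rcases Finset.mem_union.mp hx with hx1 | hx1 <;>
          rcases Finset.mem_union.mp hy with hy1 | hy1
        · exact hI'g x (Finset.mem_sdiff.mp hx1).1 y (Finset.mem_sdiff.mp hy1).1 hxy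
        · -- x ∈ I' \ ZY, y ∈ Y
          have hxI' := Finset.mem_sdiff.mp hx1
          by_contra hR
          exact hxI'.2 (Finset.mem_filter.mpr ⟨hxI'.1, y, hy1, hR⟩)
        · -- x ∈ Y, y ∈ I' \ ZY
          have hyI' := Finset.mem_sdiff.mp hy1
          by_contra hR
          have : R y x := by
            by_contra hR2
            exact hyI'.2 (Finset.mem_filter.mpr ⟨hyI'.1, x, hx1, hR2⟩)
          exact hR (hsym y x this)
        · exact hI1g x (hXI1 (hYX hx1)) y (hXI1 (hYX hy1)) hxy
      have hdisj : Disjoint (I' \ ZY) Y := by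
        rw [Finset.disjoint_right]
        intro y hy hy2
        exact hYI' y hy (Finset.mem_sdiff.mp hy2).1
      have hJcard : J.card = I'.card - ZY.card + Y.card := by
        rw [hJdef, Finset.card_union_of_disjoint hdisj, Finset.card_sdiff_of_subset hZYI']
      have h1 : α < J.card := by
        have h2 : ZY.card ≤ I'.card := Finset.card_le_card hZYI'
        omega
      exact absurd (hmax J hJV hJg) (by omega)
    obtain ⟨Z', hZ'V, hZ'I1, hZ'card, hZ'nb⟩ := IH X' hX'ss (hX'X.trans hXI1)
    have hZ'I' : ∀ z ∈ Z', z ∉ I' := by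
      intro z hz hzI'
      obtain ⟨x, hxX', hRzx⟩ := hZ'nb z hz
      have hxI' : x ∈ I' := (Finset.mem_inter.mp hxX').2
      have hzx : z ≠ x := by
        intro h
        exact hZ'I1 z hz (h ▸ hXI1 (hX'X hxX'))
      exact hRzx (hI'g z hzI' x hxI' hzx)
    refine ⟨ZY ∪ Z', ?_, ?_, ?_, ?_⟩
    · intro z hz
      rcases Finset.mem_union.mp hz with h | h
      · exact hI'V (hZYI' h)
      · exact hZ'V h
    · intro z hz hzI1
      rcases Finset.mem_union.mp hz with h | h
      · obtain ⟨hzI', y, hyY, hRzy⟩ := Finset.mem_filter.mp h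
        have hzy : z ≠ y := by
          intro he
          exact hYI' y hyY (he ▸ hzI')
        exact hRzy (hI1g z hzI1 y (hXI1 (hYX hyY)) hzy)
      · exact hZ'I1 z h hzI1
    · have hdisj2 : Disjoint ZY Z' := by
        rw [Finset.disjoint_left]
        intro z hz hz2
        exact hZ'I' z hz2 (hZYI' hz)
      rw [Finset.card_union_of_disjoint hdisj2]
      have hXsplit : X'.card + Y.card = X.card := by
        rw [hX'def, hYdef]; exact Finset.card_inter_add_card_sdiff X I'
      omega
    · intro z hz
      rcases Finset.mem_union.mp hz with h | h
      · obtain ⟨_, y, hyY, hRzy⟩ := Finset.mem_filter.mp h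
        exact ⟨y, hYX hyY, hRzy⟩
      · obtain ⟨x, hxX', hRzx⟩ := hZ'nb z h
        exact ⟨x, hX'X hxX', hRzx⟩

open Classical in
theorem keyCombinatorial {ι : Type*} (R : ι → ι → Prop)
    (hsym : ∀ u v, R u v → R v u) (k m : ℕ) (hk : 2 ≤ k) (hkm : k ≤ m)
    (hm : m ≤ 2 * k - 2) :
    ∀ n : ℕ, ∀ V : Finset ι, V.card = n → m ≤ n →
      (∀ W ⊆ V, W.card = m → ∃ K ⊆ W, K.card = k ∧ GoodRel R K) →
      ∃ G ⊆ V, GoodRel R G ∧ n - m + k ≤ G.card := by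
  intro n
  induction n using Nat.strong_induction_on with
  | _ n IH =>
  intro V hV hmn hag
  rcases eq_or_lt_of_le hmn with heq | hlt
  · -- base case n = m
    obtain ⟨K, hKW, hKc, hKg⟩ := hag V (subset_refl V) (by omega)
    exact ⟨K, hKW, hKg, by omega⟩
  · by_contra hcon
    push_neg at hcon
    set α : ℕ := n - m + k - 1 with hαdef
    have hmax : ∀ J ⊆ V, GoodRel R J → J.card ≤ α := by
      intro J hJ hJg
      have := hcon J hJ hJg
      omega
    have Hcrit : ∀ v ∈ V, ∃ I ⊆ V, GoodRel R I ∧ I.card = α ∧ v ∉ I := by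
      intro v hv
      have hcard : (V.erase v).card = n - 1 := by
        rw [Finset.card_erase_of_mem hv, hV]
      have hag' : ∀ W ⊆ V.erase v, W.card = m → ∃ K ⊆ W, K.card = k ∧ GoodRel R K :=
        fun W hW hWc => hag W (hW.trans (Finset.erase_subset v V)) hWc
      obtain ⟨G, hGsub, hGg, hGc⟩ :=
        IH (n - 1) (by omega) (V.erase v) hcard (by omega) hag'
      have h1 : G.card ≤ α := hmax G (hGsub.trans (Finset.erase_subset v V)) hGg
      have h2 : α ≤ G.card := by omega
      exact ⟨G, hGsub.trans (Finset.erase_subset v V), hGg, by omega,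
        fun hvG => (Finset.mem_erase.mp (hGsub hvG)).1 rfl⟩
    -- get a maximum good set I1
    have hVne : V.Nonempty := by
      rw [← Finset.card_pos, hV]; omega
    obtain ⟨v0, hv0⟩ := hVne
    obtain ⟨I1, hI1V, hI1g, hI1c, _⟩ := Hcrit v0 hv0
    obtain ⟨Z, hZV, hZI1, hZc, _⟩ :=
      exchangeLemma R hsym V α hmax I1 hI1V hI1g Hcrit I1 (subset_refl I1)
    -- |V| ≥ |I1| + |Z| ≥ 2α
    have hdisj : Disjoint I1 Z := by
      rw [Finset.disjoint_right]
      exact hZI1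
    have hsub : I1 ∪ Z ⊆ V := Finset.union_subset hI1V hZV
    have hcount : I1.card + Z.card ≤ n := by
      rw [← hV, ← Finset.card_union_of_disjoint hdisj]
      exact Finset.card_le_card hsub
    omega

/-- Let `d ≥ 1` and `m, k ≥ 2` with `k ≤ m ≤ 2k - 2`.  In a `(k,m)`-agreeable
`d`-box society with `n ≥ m` voters (each approval set is a product of `d`
closed bounded intervals, possibly empty), there is a point of `ℝ^d` contained
in at least `n - m + k` of the approval sets. -/
theorem agreeable_box_society_agreement
    {ι : Type*} (d k m : ℕ) (hd : 1 ≤ d) (hk : 2 ≤ k) (hkm : k ≤ m)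
    (hm : m ≤ 2 * k - 2)
    (V : Finset ι) (n : ℕ) (hn : V.card = n) (hnm : m ≤ n)
    (A : ι → Set (Fin d → ℝ))
    (hbox : ∀ v ∈ V, ∃ a b : Fin d → ℝ,
      A v = Set.univ.pi fun i => Set.Icc (a i) (b i))
    (hagree : ∀ W ⊆ V, W.card = m →
      ∃ K ⊆ W, K.card = k ∧ (⋂ v ∈ K, A v).Nonempty) :
    ∃ p : Fin d → ℝ, n - m + k ≤ {v ∈ (V : Set ι) | p ∈ A v}.ncard := by
  classical
  set R : ι → ι → Prop := fun u v => (A u ∩ A v).Nonempty with hRdef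
  have hsym : ∀ u v, R u v → R v u := by
    intro u v ⟨q, hq1, hq2⟩
    exact ⟨q, hq2, hq1⟩
  have hag : ∀ W ⊆ V, W.card = m → ∃ K ⊆ W, K.card = k ∧ GoodRel R K := by
    intro W hW hWc
    obtain ⟨K, hKW, hKc, q, hq⟩ := hagree W hW hWc
    refine ⟨K, hKW, hKc, fun u hu v hv _ => ⟨q, ?_, ?_⟩⟩
    · simp only [Set.mem_iInter] at hq
      exact hq u hu
    · simp only [Set.mem_iInter] at hq
      exact hq v hv
  obtain ⟨G, hGV, hGg, hGc⟩ := keyCombinatorial R hsym k m hk hkm hm n V hn hnm hag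
  have hG2 : 2 ≤ G.card := le_trans (by omega) hGc
  have hGne : G.Nonempty := by rw [← Finset.card_pos]; omega
  -- choose box representations
  have hbox2 : ∀ v : ι, ∃ ab : (Fin d → ℝ) × (Fin d → ℝ), v ∈ V →
      A v = Set.univ.pi fun i => Set.Icc (ab.1 i) (ab.2 i) := by
    intro v
    by_cases h : v ∈ V
    · obtain ⟨a, b, hab⟩ := hbox v h
      exact ⟨(a, b), fun _ => hab⟩
    · exact ⟨(0, 0), fun h' => absurd h' h⟩
  choose ab hab using hbox2
  set a : ι → Fin d → ℝ := fun v => (ab v).1 with hadef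
  set b : ι → Fin d → ℝ := fun v => (ab v).2 with hbdef
  have habox : ∀ v ∈ G, A v = Set.univ.pi fun i => Set.Icc (a v i) (b v i) :=
    fun v hv => hab v (hGV hv)
  -- key inequality: ∀ u v ∈ G, ∀ i, a u i ≤ b v i
  have key : ∀ u ∈ G, ∀ v ∈ G, ∀ i, a u i ≤ b v i := by
    intro u hu v hv i
    by_cases huv : u = v
    · subst huv
      obtain ⟨w, hw, hwu⟩ := Finset.exists_mem_ne hG2 u
      obtain ⟨q, hq1, hq2⟩ := hGg u hu w hw (Ne.symm hwu)
      rw [habox u hu] at hq1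
      have h1 := Set.mem_univ_pi.mp hq1 i
      exact le_trans h1.1 h1.2
    · obtain ⟨q, hq1, hq2⟩ := hGg u hu v hv huv
      rw [habox u hu] at hq1
      rw [habox v hv] at hq2
      exact le_trans (Set.mem_univ_pi.mp hq1 i).1 (Set.mem_univ_pi.mp hq2 i).2
  set p : Fin d → ℝ := fun i => G.sup' hGne (fun u => a u i) with hpdef
  have hpmem : ∀ v ∈ G, p ∈ A v := by
    intro v hv
    rw [habox v hv]
    rw [Set.mem_univ_pi]
    intro i
    constructor
    · exact Finset.le_sup' (fun u => a u i) hv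
    · exact Finset.sup'_le hGne _ (fun u hu => key u hu v hv i)
  refine ⟨p, ?_⟩
  have hsubset : (G : Set ι) ⊆ {v ∈ (V : Set ι) | p ∈ A v} := by
    intro v hv
    have hvG : v ∈ G := hv
    exact ⟨hGV hvG, hpmem v hvG⟩
  have hfin : {v ∈ (V : Set ι) | p ∈ A v}.Finite :=
    V.finite_toSet.subset (fun v hv => hv.1)
  calc n - m + k ≤ G.card := hGc
    _ = (G : Set ι).ncard := (Set.ncard_coe_finset G).symm
    _ ≤ _ := Set.ncard_le_ncard hsubset hfin
end

section
/- Tightness of the linear agreement bound: let 2 ≤ k ≤ m and write m-1 = (k-1)q + ρ with q ≥ 1 and 0 ≤ ρ ≤ k-2. For every n ≥ m there exists a (k,m)-agreeable linear society with n voters (approval sets being closed bounded intervals in ℝ) whose agreement number is exactly ⌈(n-ρ)/q⌉; it can be constructed from q pairwise disjoint intervals, each repeated either ⌈(n-ρ)/q⌉ or ⌊(n-ρ)/q⌋ times, together with ρ additional pairwise disjoint intervals disjoint from all others. -/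
/-!
Put `N = n - ρ` and `c = ⌈N / q⌉`. Voter `v < N` approves only the point `v / c`, so these
voters form `q` blocks of at most `c` voters each, the first of size exactly `c`; each of the
remaining `ρ` voters approves a private negative point. Hence every point is approved by at most
`c` voters, and by exactly `c` at `0`. Among any `m = (k - 1) q + ρ + 1` voters at least
`(k - 1) q + 1` lie in blocks, so by pigeonhole `k` of them lie in the same block and share its
point.
-/

open Finset

theorem Finset.exists_subset_card_eq_succ_forall_eq_of_mul_lt_card {α β : Type*} [DecidableEq β]
    {s : Finset α} {t : Finset β} {f : α → β} {k : ℕ} (hf : ∀ a ∈ s, f a ∈ t)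
    (hst : #t * k < #s) : ∃ K ⊆ s, #K = k + 1 ∧ ∃ b, ∀ a ∈ K, f a = b := by
  obtain ⟨b, -, hb⟩ := exists_lt_card_fiber_of_mul_lt_card_of_maps_to hf hst
  obtain ⟨K, hKs, hK⟩ := exists_subset_card_eq hb
  exact ⟨K, hKs.trans (filter_subset _ _), hK, b, fun a ha => (mem_filter.1 (hKs ha)).2⟩

noncomputable def blockPoint (c N v : ℕ) : ℝ :=
  if v < N then ((v / c : ℕ) : ℝ) else -(v + 1)

section blockPoint

variable {c N v w : ℕ}

theorem eq_of_blockPoint_eq_of_mod_eq (h : blockPoint c N v = blockPoint c N w)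
    (hmod : v % c = w % c) : v = w := by
  unfold blockPoint at h
  split_ifs at h
  · rw [← Nat.div_add_mod v c, ← Nat.div_add_mod w c, hmod, Nat.cast_inj.1 h]
  · linarith [(v / c).cast_nonneg (α := ℝ), w.cast_nonneg (α := ℝ)]
  · linarith [(w / c).cast_nonneg (α := ℝ), v.cast_nonneg (α := ℝ)]
  · exact Nat.cast_injective (by linarith : (v : ℝ) = w)

theorem blockPoint_eq_zero_iff (hc : 0 < c) (hcN : c ≤ N) : blockPoint c N v = 0 ↔ v < c := by
  unfold blockPoint
  split_ifs with hv
  · rw [Nat.cast_eq_zero, Nat.div_eq_zero_iff_lt hc]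
  · constructor
    · intro h; linarith [v.cast_nonneg (α := ℝ)]
    · omega

end blockPoint

section society

variable {n c N : ℕ}

theorem ncard_blockPoint_fiber_le (hc : 0 < c) (p : ℝ) :
    {v : Fin n | blockPoint c N v = p}.ncard ≤ c :=
  calc _ ≤ (range c : Set ℕ).ncard :=
        Set.ncard_le_ncard_of_injOn (fun v : Fin n => (v : ℕ) % c)
          (fun v _ => by simpa using Nat.mod_lt _ hc)
          (fun v hv w hw hvw => Fin.ext (eq_of_blockPoint_eq_of_mod_eq (hv.trans hw.symm) hvw))
          (finite_toSet _)
    _ = c := by simp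

theorem ncard_blockPoint_fiber_zero (hc : 0 < c) (hcN : c ≤ N) (hNn : N ≤ n) :
    {v : Fin n | blockPoint c N v = 0}.ncard = c := by
  simp_rw [blockPoint_eq_zero_iff hc hcN]
  rw [← coe_filter_univ, Set.ncard_coe_finset, Fin.card_filter_val_lt]
  omega

theorem exists_subset_card_eq_succ_blockPoint_eq {q k : ℕ} (hc : 0 < c) (hNqc : N ≤ q * c)
    {W : Finset (Fin n)} (hW : n - N + q * k < #W) :
    ∃ K ⊆ W, #K = k + 1 ∧ ∃ p, ∀ v ∈ K, blockPoint c N v = p := by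
  have hcompl : #(W.filter fun v : Fin n => ¬ (v : ℕ) < N) ≤ n - N := by
    refine (card_le_card_of_injOn (t := range (n - N)) (fun v : Fin n => (v : ℕ) - N)
      (fun v hv => ?_) fun v hv w hw h => ?_).trans_eq (card_range _)
    · have := (mem_filter.1 hv).2; have := v.isLt; simp only [coe_range, Set.mem_Iio]; omega
    · have := (mem_filter.1 hv).2
      have := (mem_filter.1 hw).2
      exact Fin.ext (by simp only at h; omega)
  have hblocks : q * k < #(W.filter fun v : Fin n => (v : ℕ) < N) := by
    have := card_filter_add_card_filter_not (s := W) (fun v : Fin n => (v : ℕ) < N)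
    omega
  obtain ⟨K, hKW, hK, b, hb⟩ := exists_subset_card_eq_succ_forall_eq_of_mul_lt_card
    (s := W.filter fun v : Fin n => (v : ℕ) < N) (t := range q)
    (f := fun v : Fin n => (v : ℕ) / c)
    (fun v hv => mem_range.2 ((Nat.div_lt_iff_lt_mul hc).2 ((mem_filter.1 hv).2.trans_le hNqc)))
    (by rwa [card_range])
  refine ⟨K, hKW.trans (filter_subset _ _), hK, b, fun v hv => ?_⟩
  rw [blockPoint, if_pos (mem_filter.1 (hKW hv)).2, hb v hv]

end society

section natCeilDiv

variable {N q : ℕ}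

theorem natCeil_div_pos (hN : 0 < N) (hq : 0 < q) : 0 < ⌈(N / q : ℚ)⌉₊ :=
  Nat.ceil_pos.2 (by positivity)

theorem natCeil_div_le_self (hq : 0 < q) : ⌈(N / q : ℚ)⌉₊ ≤ N :=
  Nat.ceil_le.2 (div_le_self N.cast_nonneg (Nat.one_le_cast.2 hq))

theorem le_mul_natCeil_div (hq : 0 < q) : N ≤ q * ⌈(N / q : ℚ)⌉₊ := by
  have := Nat.le_ceil (N / q : ℚ)
  rw [div_le_iff₀ (by positivity)] at this
  exact_mod_cast this.trans_eq (mul_comm _ _)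

end natCeilDiv

theorem linear_agreement_bound_tight_general
    (k m q ρ n : ℕ) (hk : 2 ≤ k)
    (hq : 1 ≤ q) (hdiv : m - 1 = (k - 1) * q + ρ)
    (hnm : m ≤ n) :
    ∃ A : Fin n → Set ℝ,
      (∀ v, ∃ a b : ℝ, a ≤ b ∧ A v = Set.Icc a b) ∧
      (∀ W : Finset (Fin n), W.card = m →
        ∃ K ⊆ W, K.card = k ∧ (⋂ v ∈ K, A v).Nonempty) ∧
      (∃ p : ℝ, ({v : Fin n | p ∈ A v}.ncard : ℤ) = ⌈((n : ℚ) - ρ) / q⌉) ∧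
      (∀ p : ℝ, ({v : Fin n | p ∈ A v}.ncard : ℤ) ≤ ⌈((n : ℚ) - ρ) / q⌉) := by
  have hm : ρ + q * (k - 1) < m := by
    have := Nat.mul_pos (by omega : 0 < k - 1) hq
    rw [mul_comm]; omega
  set N := n - ρ
  set c := ⌈(N / q : ℚ)⌉₊
  have hc : 0 < c := natCeil_div_pos (by omega) hq
  have hceil : ⌈((n : ℚ) - ρ) / q⌉ = c := by
    rw [← Nat.cast_sub (by omega), Int.natCast_ceil_eq_ceil (by positivity)]
  have hfiber (p : ℝ) : {v : Fin n | p ∈ Set.Icc (blockPoint c N v) (blockPoint c N v)}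
      = {v : Fin n | blockPoint c N v = p} := by
    simp only [Set.Icc_self, Set.mem_singleton_iff, eq_comm]
  refine ⟨fun v => Set.Icc (blockPoint c N v) (blockPoint c N v),
    fun v => ⟨_, _, le_rfl, rfl⟩, fun W hW => ?_, ⟨0, ?_⟩, fun p => ?_⟩
  · obtain ⟨K, hKW, hK, p, hp⟩ := exists_subset_card_eq_succ_blockPoint_eq (k := k - 1) hc
      (le_mul_natCeil_div hq) (by omega : n - N + q * (k - 1) < #W)
    exact ⟨K, hKW, by omega, p,
      Set.mem_iInter₂.2 fun v hv => hp v hv ▸ Set.left_mem_Icc.2 le_rfl⟩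
  · rw [hfiber, hceil, ncard_blockPoint_fiber_zero hc (natCeil_div_le_self hq) (by omega)]
  · rw [hfiber, hceil]
    exact_mod_cast ncard_blockPoint_fiber_le hc p

/-- **Tightness of the linear agreement bound.**  Let `2 ≤ k ≤ m` and write
`m - 1 = (k-1)q + ρ` with `q ≥ 1`, `0 ≤ ρ ≤ k - 2`.  For every `n ≥ m` there is
a `(k,m)`-agreeable linear society of `n` voters whose approval sets are closed
bounded intervals and whose agreement number is exactly `⌈(n - ρ)/q⌉`. -/
theorem linear_agreement_bound_tight
    (k m q ρ n : ℕ) (hk : 2 ≤ k) (hkm : k ≤ m)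
    (hq : 1 ≤ q) (hρ : ρ ≤ k - 2) (hdiv : m - 1 = (k - 1) * q + ρ)
    (hnm : m ≤ n) :
    ∃ A : Fin n → Set ℝ,
      (∀ v, ∃ a b : ℝ, a ≤ b ∧ A v = Set.Icc a b) ∧
      (∀ W : Finset (Fin n), W.card = m →
        ∃ K ⊆ W, K.card = k ∧ (⋂ v ∈ K, A v).Nonempty) ∧
      (∃ p : ℝ, ({v : Fin n | p ∈ A v}.ncard : ℤ) = ⌈((n : ℚ) - ρ) / q⌉) ∧
      (∀ p : ℝ, ({v : Fin n | p ∈ A v}.ncard : ℤ) ≤ ⌈((n : ℚ) - ρ) / q⌉) :=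
  linear_agreement_bound_tight_general k m q ρ n hk hq hdiv hnm
end

section
/- Necessity of the hypothesis m ≤ 2k-2 in the clique bound: let k ≥ 2 and m ≥ 2k-1 be integers and let n ≥ 2(m-k+1). Then the graph that is the disjoint union of two cliques of sizes ⌊n/2⌋ and ⌈n/2⌉ has the property that every subset of its vertex set of size m includes a clique of size k, yet its clique number ⌈n/2⌉ is strictly less than n - m + k. -/
/-- The disjoint union of two cliques, of sizes `⌊n/2⌋` (vertices with index
`< n/2`) and `⌈n/2⌉` (the remaining vertices), on the vertex set `Fin n`. -/
def twoCliquesGraph (n : ℕ) : SimpleGraph (Fin n) where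
  Adj u v := u ≠ v ∧ (((u : ℕ) < n / 2) ↔ ((v : ℕ) < n / 2))
  symm := by
    constructor
    intro u v h
    exact ⟨h.1.symm, h.2.symm⟩
  loopless := by
    constructor
    intro v h
    exact h.1 rfl

/-!
Each side of the graph is a clique, and every clique lies within one side. The larger side
has `⌈n/2⌉` vertices, which is the clique number, while by pigeonhole an `m`-set with
`m ≥ 2k - 1` has `k` vertices on one side. Finally `n ≥ 2(m - k + 1)` makes `n - m + k`
exceed `⌈n/2⌉`.
-/

open Finset

theorem Finset.le_card_inter_or_le_card_sdiff {α : Type*} [DecidableEq α] {k : ℕ}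
    {s : Finset α} (t : Finset α) (hs : 2 * k - 1 ≤ #s) :
    k ≤ #(s ∩ t) ∨ k ≤ #(s \ t) := by
  have := card_inter_add_card_sdiff s t
  omega

namespace TwoCliquesGraph

variable {n : ℕ}

def lowHalf (n : ℕ) : Finset (Fin n) := {v | (v : ℕ) < n / 2}

lemma card_lowHalf : #(lowHalf n) = n / 2 := by
  rw [lowHalf, Fin.card_filter_val_lt]
  omega

lemma card_compl_lowHalf : #(lowHalf n)ᶜ = (n + 1) / 2 := by
  rw [card_compl, Fintype.card_fin, card_lowHalf]
  omega

lemma mem_lowHalf {v : Fin n} : v ∈ lowHalf n ↔ (v : ℕ) < n / 2 := by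
  simp [lowHalf]

lemma isClique_lowHalf : (twoCliquesGraph n).IsClique (lowHalf n : Set (Fin n)) :=
  fun _ hu _ hv huv => ⟨huv, iff_of_true (mem_lowHalf.mp hu) (mem_lowHalf.mp hv)⟩

lemma isClique_compl_lowHalf :
    (twoCliquesGraph n).IsClique ((lowHalf n)ᶜ : Finset (Fin n)) := by
  intro u hu v hv huv
  rw [coe_compl, Set.mem_compl_iff, mem_coe, mem_lowHalf] at hu hv
  exact ⟨huv, iff_of_false hu hv⟩

lemma subset_lowHalf_or_subset_compl {s : Finset (Fin n)}
    (hs : (twoCliquesGraph n).IsClique (s : Set (Fin n))) :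
    s ⊆ lowHalf n ∨ s ⊆ (lowHalf n)ᶜ := by
  by_cases h : ∃ u ∈ s, u ∈ lowHalf n
  · obtain ⟨u, hus, hu⟩ := h
    refine .inl fun v hvs => ?_
    rcases eq_or_ne v u with rfl | hvu
    · exact hu
    · exact mem_lowHalf.mpr ((hs hvs hus hvu).2.mpr (mem_lowHalf.mp hu))
  · simp only [not_exists, not_and] at h
    exact .inr fun v hvs => mem_compl.mpr (h v hvs)

lemma cliqueNum_eq : (twoCliquesGraph n).cliqueNum = (n + 1) / 2 := by
  apply le_antisymm
  · obtain ⟨s, hs⟩ := (twoCliquesGraph n).exists_isNClique_cliqueNum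
    rw [← hs.card_eq]
    rcases subset_lowHalf_or_subset_compl hs.isClique with h | h
    · exact (card_le_card h).trans (card_lowHalf.trans_le (by omega))
    · exact card_compl_lowHalf ▸ card_le_card h
  · exact card_compl_lowHalf ▸ isClique_compl_lowHalf.card_le_cliqueNum

lemma exists_isNClique_subset {k : ℕ} {W : Finset (Fin n)} (hW : 2 * k - 1 ≤ #W) :
    ∃ K ⊆ W, (twoCliquesGraph n).IsNClique k K := by
  rcases W.le_card_inter_or_le_card_sdiff (lowHalf n) hW with h | h
  · obtain ⟨K, hKW, hK⟩ := exists_subset_card_eq h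
    refine ⟨K, hKW.trans inter_subset_left, ⟨isClique_lowHalf.subset ?_, hK⟩⟩
    exact_mod_cast hKW.trans inter_subset_right
  · obtain ⟨K, hKW, hK⟩ := exists_subset_card_eq h
    refine ⟨K, hKW.trans sdiff_subset, ⟨isClique_compl_lowHalf.subset ?_, hK⟩⟩
    rw [sdiff_eq_inter_compl] at hKW
    exact_mod_cast hKW.trans inter_subset_right

end TwoCliquesGraph

theorem two_cliques_counterexample_general
    (k m n : ℕ) (hm : 2 * k - 1 ≤ m) (hn : 2 * (m - k + 1) ≤ n) :
    (∀ W : Finset (Fin n), W.card = m →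
      ∃ K ⊆ W, (twoCliquesGraph n).IsNClique k K) ∧
    (twoCliquesGraph n).cliqueNum = (n + 1) / 2 ∧
    (n + 1) / 2 < n - m + k :=
  ⟨fun _ hW => TwoCliquesGraph.exists_isNClique_subset (hW ▸ hm),
    TwoCliquesGraph.cliqueNum_eq, by omega⟩

/-- **Necessity of the hypothesis `m ≤ 2k - 2`.**  Let `k ≥ 2`, `m ≥ 2k - 1`
and `n ≥ 2(m - k + 1)`.  The disjoint union of two cliques of sizes `⌊n/2⌋` and
`⌈n/2⌉` has the property that every `m`-element vertex set includes a clique of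
size `k`, yet its clique number `⌈n/2⌉` is strictly less than `n - m + k`. -/
theorem two_cliques_counterexample
    (k m n : ℕ) (hk : 2 ≤ k) (hm : 2 * k - 1 ≤ m) (hn : 2 * (m - k + 1) ≤ n) :
    (∀ W : Finset (Fin n), W.card = m →
      ∃ K ⊆ W, (twoCliquesGraph n).IsNClique k K) ∧
    (twoCliquesGraph n).cliqueNum = (n + 1) / 2 ∧
    (n + 1) / 2 < n - m + k :=
  two_cliques_counterexample_general k m n hm hn
end

section
/- In the proof of the agreeable linear society theorem: let X be a closed subset of ℝ and let V be a finite set of voters with nonempty approval sets A_v = X ∩ I_v, where each I_v is a closed bounded interval; write L_v = min A_v, R_v = max A_v, x = max_v L_v achieved by voter i, and y = min_v R_v achieved by voter j. If x > y and among every three voters some two have intersecting approval sets, then for every voter v the approval set A_v contains x or y; consequently one of the two platforms x, y lies in at least half of the approval sets. -/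
/-!
Since `y < x`, the approval sets of `i` (whose minimum is `x`) and `j` (whose maximum is `y`) are
disjoint, so agreeability applied to `v, i, j` forces `A v` to meet `A i` or `A j`. If `A v` meets
`A i` at `p`, then `min A v ≤ x ≤ p` and `x ∈ X`, so `x ∈ A v` because `A v` is the trace of
an interval on `X`; symmetrically for `A j` and `y`. A cover of `V` by two sets has one of them of
at least half its size.
-/

open Set

theorem Finset.card_le_two_mul_ncard_sep_or {ι : Type*} {V : Finset ι} {P Q : ι → Prop}
    (h : ∀ v ∈ V, P v ∨ Q v) :
    V.card ≤ 2 * {v ∈ (V : Set ι) | P v}.ncard ∨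
      V.card ≤ 2 * {v ∈ (V : Set ι) | Q v}.ncard := by
  classical
  have hcover : V.card ≤ (V.filter P).card + (V.filter Q).card :=
    calc V.card = (V.filter fun v => P v ∨ Q v).card := by rw [Finset.filter_true_of_mem h]
      _ = (V.filter P ∪ V.filter Q).card := by rw [Finset.filter_or]
      _ ≤ _ := Finset.card_union_le _ _
  have hncard (R : ι → Prop) : {v ∈ (V : Set ι) | R v}.ncard = (V.filter R).card := by
    rw [← Set.ncard_coe_finset, Finset.coe_filter]; rfl
  rw [hncard, hncard]
  omega

theorem inter_nonempty_or_of_agreeable {ι α : Type*} {V : Finset ι} {A : ι → Set α}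
    (hagree : ∀ u ∈ V, ∀ v ∈ V, ∀ w ∈ V, u ≠ v → u ≠ w → v ≠ w →
      (A u ∩ A v).Nonempty ∨ (A u ∩ A w).Nonempty ∨ (A v ∩ A w).Nonempty)
    {i j : ι} (hi : i ∈ V) (hj : j ∈ V) (hij : Disjoint (A i) (A j))
    (hAi : (A i).Nonempty) (hAj : (A j).Nonempty) :
    ∀ v ∈ V, (A v ∩ A i).Nonempty ∨ (A v ∩ A j).Nonempty := by
  intro v hv
  by_cases hvi : v = i
  · subst hvi; exact Or.inl (by rwa [inter_self])
  by_cases hvj : v = j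
  · subst hvj; exact Or.inr (by rwa [inter_self])
  have hne : i ≠ j := by
    rintro rfl
    exact hAi.ne_empty (disjoint_self.1 hij)
  rcases hagree v hv i hi j hj hvi hvj hne with h | h | h
  exacts [Or.inl h, Or.inr h, absurd h (not_nonempty_iff_eq_empty.2 hij.inter_eq)]

theorem disjoint_of_csSup_lt_csInf {α : Type*} [ConditionallyCompleteLattice α] {s t : Set α}
    (hs : BddBelow s) (ht : BddAbove t) (h : sSup t < sInf s) : Disjoint s t :=
  disjoint_left.2 fun _ hps hpt => h.not_ge ((csInf_le hs hps).trans (le_csSup ht hpt))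

theorem mem_of_csInf_le_of_le_mem {α : Type*} [ConditionallyCompleteLinearOrder α]
    [TopologicalSpace α] [OrderTopology α] {X I A : Set α} (hI : I.OrdConnected)
    (hA : A = X ∩ I) (hc : IsCompact A) {z p : α}
    (hz : z ∈ X) (hp : p ∈ A) (hz₁ : sInf A ≤ z) (hz₂ : z ≤ p) :
    z ∈ A := by
  have hmin := hc.sInf_mem ⟨p, hp⟩
  subst hA
  exact ⟨hz, hI.out hmin.2 hp.2 ⟨hz₁, hz₂⟩⟩

theorem mem_of_le_of_le_csSup_mem {α : Type*} [ConditionallyCompleteLinearOrder α]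
    [TopologicalSpace α] [OrderTopology α] {X I A : Set α} (hI : I.OrdConnected)
    (hA : A = X ∩ I) (hc : IsCompact A) {z p : α}
    (hz : z ∈ X) (hp : p ∈ A) (hz₁ : p ≤ z) (hz₂ : z ≤ sSup A) :
    z ∈ A := by
  have hmax := hc.sSup_mem ⟨p, hp⟩
  subst hA
  exact ⟨hz, hI.out hp.2 hmax.2 ⟨hz₁, hz₂⟩⟩

theorem agreeable_proof_step_general
    {ι : Type*} (X : Set ℝ) (hX : IsClosed X)
    (V : Finset ι)
    (A : ι → Set ℝ)
    (hA : ∀ v ∈ V, ∃ a b : ℝ, a ≤ b ∧ A v = X ∩ Set.Icc a b)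
    (hne : ∀ v ∈ V, (A v).Nonempty)
    (i : ι) (hi : i ∈ V) (j : ι) (hj : j ∈ V) (x y : ℝ)
    (hx : x = sInf (A i)) (hxmax : ∀ v ∈ V, sInf (A v) ≤ x)
    (hy : y = sSup (A j)) (hymin : ∀ v ∈ V, y ≤ sSup (A v))
    (hyx : y < x)
    (hagree : ∀ u ∈ V, ∀ v ∈ V, ∀ w ∈ V, u ≠ v → u ≠ w → v ≠ w →
      (A u ∩ A v).Nonempty ∨ (A u ∩ A w).Nonempty ∨ (A v ∩ A w).Nonempty) :
    (∀ v ∈ V, x ∈ A v ∨ y ∈ A v) ∧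
      (V.card ≤ 2 * {v ∈ (V : Set ι) | x ∈ A v}.ncard ∨
        V.card ≤ 2 * {v ∈ (V : Set ι) | y ∈ A v}.ncard) := by
  have hcomp : ∀ v ∈ V, IsCompact (A v) := fun v hv => by
    obtain ⟨a, b, -, hab⟩ := hA v hv
    exact hab ▸ isCompact_Icc.inter_left hX
  have hsubX : ∀ v ∈ V, A v ⊆ X := fun v hv => by
    obtain ⟨a, b, -, hab⟩ := hA v hv
    exact hab ▸ inter_subset_left
  have hxA : x ∈ A i := hx ▸ (hcomp i hi).sInf_mem (hne i hi)
  have hyA : y ∈ A j := hy ▸ (hcomp j hj).sSup_mem (hne j hj)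
  have hdisj : Disjoint (A i) (A j) :=
    disjoint_of_csSup_lt_csInf (hcomp i hi).bddBelow (hcomp j hj).bddAbove (hx ▸ hy ▸ hyx)
  have hcover : ∀ v ∈ V, x ∈ A v ∨ y ∈ A v := by
    intro v hv
    obtain ⟨a, b, -, hab⟩ := hA v hv
    rcases inter_nonempty_or_of_agreeable hagree hi hj hdisj ⟨x, hxA⟩ ⟨y, hyA⟩ v hv with
      ⟨p, hpv, hpi⟩ | ⟨p, hpv, hpj⟩
    · exact .inl <| mem_of_csInf_le_of_le_mem ordConnected_Icc hab (hcomp v hv)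
        (hsubX i hi hxA) hpv (hxmax v hv) (hx ▸ csInf_le (hcomp i hi).bddBelow hpi)
    · exact .inr <| mem_of_le_of_le_csSup_mem ordConnected_Icc hab (hcomp v hv)
        (hsubX j hj hyA) hpv (hy ▸ le_csSup (hcomp j hj).bddAbove hpj) (hymin v hv)
  exact ⟨hcover, Finset.card_le_two_mul_ncard_sep_or hcover⟩

/-- A step in the proof of the agreeable linear society theorem: in an agreeable
linear society with nonempty compact approval sets, writing `L v = min (A v)`,
`R v = max (A v)`, `x = max_v L v` (achieved by voter `i`) and `y = min_v R v`
(achieved by voter `j`), if `x > y` then every approval set contains `x` or `y`;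
consequently one of the platforms `x`, `y` lies in at least half of the approval
sets. -/
theorem agreeable_proof_step
    {ι : Type*} (X : Set ℝ) (hX : IsClosed X)
    (V : Finset ι) (hV : V.Nonempty)
    (A : ι → Set ℝ)
    (hA : ∀ v ∈ V, ∃ a b : ℝ, a ≤ b ∧ A v = X ∩ Set.Icc a b)
    (hne : ∀ v ∈ V, (A v).Nonempty)
    (i : ι) (hi : i ∈ V) (j : ι) (hj : j ∈ V) (x y : ℝ)
    (hx : x = sInf (A i)) (hxmax : ∀ v ∈ V, sInf (A v) ≤ x)
    (hy : y = sSup (A j)) (hymin : ∀ v ∈ V, y ≤ sSup (A v))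
    (hyx : y < x)
    (hagree : ∀ u ∈ V, ∀ v ∈ V, ∀ w ∈ V, u ≠ v → u ≠ w → v ≠ w →
      (A u ∩ A v).Nonempty ∨ (A u ∩ A w).Nonempty ∨ (A v ∩ A w).Nonempty) :
    (∀ v ∈ V, x ∈ A v ∨ y ∈ A v) ∧
      (V.card ≤ 2 * {v ∈ (V : Set ι) | x ∈ A v}.ncard ∨
        V.card ≤ 2 * {v ∈ (V : Set ι) | y ∈ A v}.ncard) :=
  agreeable_proof_step_general X hX V A hA hne i hi j hj x y hx hxmax hy hymin hyx hagree
end
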